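/- arXiv:2011.12435 — 7 statements merged into one kernel-verified Lean document; each statement's English description precedes it below -/
import Mathlib

section
/- Let q = 2^{ℓ'd} for natural numbers ℓ' and d. A nonnegative integer a < q with binary representation (a_{ℓ'd−1} … a_0)_2 is a multiple of (q − 1)/(q^{1/d} − 1) = (2^{ℓ'd} − 1)/(2^{ℓ'} − 1) if and only if its d consecutive blocks of ℓ' binary digits are all equal, i.e., (a_{ℓ'−1} … a_0)_2 = (a_{2ℓ'−1} … a_{ℓ'})_2 = … = (a_{dℓ'−1} … a_{(d−1)ℓ'})_2. -/
lemma geom_two (n k : ℕ) :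
    (2 ^ n - 1) * ∑ i ∈ Finset.range k, 2 ^ (i * n) = 2 ^ (k * n) - 1 := by
  induction k with
  | zero => simp
  | succ k ih =>
    rw [Finset.sum_range_succ, Nat.mul_add, ih]
    have h1 : 1 ≤ 2 ^ (k * n) := Nat.one_le_two_pow
    have h2 : (2 ^ n - 1) * 2 ^ (k * n) = 2 ^ ((k+1) * n) - 2 ^ (k * n) := by
      rw [Nat.sub_mul, one_mul, ← pow_add]
      ring_nf
    have h3 : 2 ^ (k * n) ≤ 2 ^ ((k+1) * n) := Nat.pow_le_pow_right (by norm_num) (by nlinarith)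
    omega

lemma block_lemma (ℓ' b d r : ℕ) (hb : b < 2 ^ ℓ') (hr : r < d) :
    (b * ∑ i ∈ Finset.range d, 2 ^ (i * ℓ')) / 2 ^ (r * ℓ') % 2 ^ ℓ' = b := by
  obtain ⟨s, rfl⟩ : ∃ s, d = r + (s + 1) := ⟨d - r - 1, by omega⟩
  rw [Finset.sum_range_add]
  have hsplit : ∀ i, 2 ^ ((r + i) * ℓ') = 2 ^ (r * ℓ') * 2 ^ (i * ℓ') := by
    intro i; rw [← pow_add]; ring_nf
  simp only [hsplit, ← Finset.mul_sum]
  set T := ∑ i ∈ Finset.range r, 2 ^ (i * ℓ') with hT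
  set U := ∑ i ∈ Finset.range (s+1), 2 ^ (i * ℓ') with hU
  have hbt : b * T < 2 ^ (r * ℓ') := by
    have h1 : b * T ≤ (2 ^ ℓ' - 1) * T := Nat.mul_le_mul_right _ (by omega)
    have hg := geom_two ℓ' r
    rw [← hT] at hg
    have h2 : 1 ≤ 2 ^ (r * ℓ') := Nat.one_le_two_pow
    omega
  rw [Nat.mul_add, ← mul_assoc, mul_comm b (2 ^ (r * ℓ')), mul_assoc,
    Nat.add_mul_div_left _ _ (Nat.pow_pos (by norm_num)),
    Nat.div_eq_of_lt hbt, zero_add]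
  have hU1 : U = 1 + 2 ^ ℓ' * ∑ i ∈ Finset.range s, 2 ^ (i * ℓ') := by
    rw [hU, Finset.sum_range_succ']
    simp only [zero_mul, pow_zero, Finset.mul_sum, ← pow_add]
    rw [add_comm]
    congr 1
    apply Finset.sum_congr rfl
    intro i _; congr 1; ring
  rw [hU1, Nat.mul_add, mul_one, ← mul_assoc, mul_comm b (2 ^ ℓ'), mul_assoc,
    Nat.add_mul_mod_self_left, Nat.mod_eq_of_lt hb]

lemma recon_lemma (ℓ' b : ℕ) (hb : b < 2 ^ ℓ') :
    ∀ d a, a < 2 ^ (ℓ' * d) → (∀ r < d, a / 2 ^ (r * ℓ') % 2 ^ ℓ' = b) →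
      a = b * ∑ i ∈ Finset.range d, 2 ^ (i * ℓ') := by
  intro d
  induction d with
  | zero =>
    intro a ha _
    simp only [Nat.mul_zero, pow_zero] at ha
    simp [Nat.lt_one_iff.mp ha]
  | succ d ih =>
    intro a ha hblocks
    have hd : a / 2 ^ (d * ℓ') = b := by
      have h1 := hblocks d (by omega)
      have h2 : a / 2 ^ (d * ℓ') < 2 ^ ℓ' := by
        rw [Nat.div_lt_iff_lt_mul (Nat.pow_pos (by norm_num)), ← pow_add]
        calc a < 2 ^ (ℓ' * (d+1)) := ha
        _ = 2 ^ (ℓ' + d * ℓ') := by congr 1; ring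
      rwa [Nat.mod_eq_of_lt h2] at h1
    have hmod : a % 2 ^ (ℓ' * d) = b * ∑ i ∈ Finset.range d, 2 ^ (i * ℓ') := by
      apply ih
      · exact Nat.mod_lt _ (Nat.pow_pos (by norm_num))
      · intro r hr
        have h1 : (2:ℕ) ^ (r * ℓ') * 2 ^ ℓ' ∣ 2 ^ (ℓ' * d) := by
          rw [← pow_add]
          exact pow_dvd_pow 2 (by nlinarith)
        rw [← Nat.mod_mul_right_div_self, Nat.mod_mod_of_dvd _ h1,
          Nat.mod_mul_right_div_self]
        exact hblocks r (by omega)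
    have heq : a = a % 2 ^ (ℓ' * d) + 2 ^ (ℓ' * d) * (a / 2 ^ (ℓ' * d)) :=
      (Nat.mod_add_div _ _).symm
    rw [Finset.sum_range_succ, Nat.mul_add, ← hmod]
    have he : (2:ℕ) ^ (ℓ' * d) = 2 ^ (d * ℓ') := by rw [Nat.mul_comm]
    conv_lhs => rw [heq]
    rw [show a / 2 ^ (ℓ' * d) = b from by rw [he]; exact hd, he]
    ring

/-- For `q = 2^(ℓ'd)`, a nonnegative integer `a < q` is a multiple of
`(2^(ℓ'd) - 1)/(2^ℓ' - 1) = 1 + 2^ℓ' + ⋯ + 2^((d-1)ℓ')` iff its `d` consecutive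
blocks of `ℓ'` binary digits are all equal. -/
theorem multiple_iff_repeating_blocks (ℓ' d a : ℕ) (ha : a < 2 ^ (ℓ' * d)) :
    (∑ i ∈ Finset.range d, 2 ^ (i * ℓ')) ∣ a ↔
      ∀ r < d, a / 2 ^ (r * ℓ') % 2 ^ ℓ' = a % 2 ^ ℓ' := by
  constructor
  · rintro ⟨b, rfl⟩
    intro r hr
    have hd : 0 < d := by omega
    set S := ∑ i ∈ Finset.range d, 2 ^ (i * ℓ') with hS
    have hS1 : 1 ≤ S := by
      calc 1 = ∑ i ∈ Finset.range 1, 2 ^ (i * ℓ') := by simp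
      _ ≤ S := Finset.sum_le_sum_of_subset (by simpa using hd)
    have hb : b < 2 ^ ℓ' := by
      by_contra hle
      push_neg at hle
      have hg := geom_two ℓ' d
      rw [mul_comm, ← hS] at hg
      have hms : S * (2 ^ ℓ' - 1) = S * 2 ^ ℓ' - S := by
        rw [Nat.mul_sub, mul_one]
      have hle1 : S ≤ S * 2 ^ ℓ' := Nat.le_mul_of_pos_right _ (Nat.pow_pos (by norm_num))
      have h1 : 1 ≤ 2 ^ (d * ℓ') := Nat.one_le_two_pow
      have h2 : S * 2 ^ ℓ' ≤ S * b := Nat.mul_le_mul_left _ hle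
      have he : (2:ℕ) ^ (d * ℓ') = 2 ^ (ℓ' * d) := by rw [Nat.mul_comm]
      omega
    have e : S * b = b * S := mul_comm _ _
    rw [e, block_lemma ℓ' b d r hb hr]
    have h0 := block_lemma ℓ' b d 0 hb hd
    rw [← hS] at h0
    simpa using h0.symm
  · intro h
    rcases Nat.eq_zero_or_pos d with hd | hd
    · subst hd; simp at ha ⊢; omega
    have hb : a % 2 ^ ℓ' < 2 ^ ℓ' := Nat.mod_lt _ (Nat.pow_pos (by norm_num))
    have := recon_lemma ℓ' (a % 2 ^ ℓ') hb d a ha h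
    exact ⟨a % 2 ^ ℓ', by rw [mul_comm]; exact this⟩
end

section
/- Fix natural numbers ℓ' ≥ 1 and d ≥ 1, and let ℓ = ℓ'd and q = 2^ℓ. The number of pairs (a, b) with 0 ≤ a, b ≤ q − 1 whose ℓ-bit binary digits satisfy: (1) a_i ∨ b_i = 1 for all i < ℓ, and (2) for every r, s ∈ {0, …, d−1} there is no j ∈ {0, …, ℓ'−1} with b_{rℓ'+j} = a_{sℓ'+j} = 1 and a_{rℓ'+j} = b_{sℓ'+j} = 0, equals (2^{d+1} − 1)^{ℓ'}. -/
open scoped Classical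

private lemma bmc_testBit_fFFE {n : ℕ} (f : Fin n → Fin 2) (i : Fin n) :
    ((finFunctionFinEquiv f : Fin (2 ^ n)) : ℕ).testBit i = decide (f i = 1) := by
  have h : (f i : ℕ) = (finFunctionFinEquiv f : ℕ) / 2 ^ (i : ℕ) % 2 := by
    conv_lhs => rw [← Equiv.symm_apply_apply finFunctionFinEquiv f]
    rfl
  rw [Nat.testBit_eq_decide_div_mod_eq, ← h]
  simp [Fin.ext_iff]

/-- decode a number into a doubly-indexed bit array: column `j`, block `r`. -/
private def bmcDec (ℓ' d : ℕ) (a : ℕ) (j : Fin ℓ') (r : Fin d) : Fin 2 :=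
  if a.testBit ((r : ℕ) * ℓ' + (j : ℕ)) then 1 else 0

private lemma bmcDec_eq_one_iff (ℓ' d : ℕ) (a : ℕ) (j : Fin ℓ') (r : Fin d) :
    bmcDec ℓ' d a j r = 1 ↔ a.testBit ((r : ℕ) * ℓ' + (j : ℕ)) = true := by
  unfold bmcDec
  by_cases h : a.testBit ((r : ℕ) * ℓ' + (j : ℕ)) <;> simp [h]

/-- encode a doubly-indexed bit array into a number -/
private def bmcNum (ℓ' d : ℕ) (hℓ' : 0 < ℓ') (g : Fin ℓ' → Fin d → Fin 2) : ℕ :=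
  ((finFunctionFinEquiv (fun i : Fin (ℓ' * d) =>
      g ⟨(i : ℕ) % ℓ', Nat.mod_lt _ hℓ'⟩
        ⟨(i : ℕ) / ℓ', by
          have hi := i.isLt
          have hcomm : ℓ' * d = d * ℓ' := Nat.mul_comm ℓ' d
          rw [Nat.div_lt_iff_lt_mul hℓ']
          omega⟩) : Fin (2 ^ (ℓ' * d))) : ℕ)

private lemma bmcNum_lt (ℓ' d : ℕ) (hℓ' : 0 < ℓ') (g : Fin ℓ' → Fin d → Fin 2) :
    bmcNum ℓ' d hℓ' g < 2 ^ (ℓ' * d) := Fin.isLt _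

private lemma bmcNum_testBit (ℓ' d : ℕ) (hℓ' : 0 < ℓ') (g : Fin ℓ' → Fin d → Fin 2)
    (i : ℕ) (hi : i < ℓ' * d) :
    (bmcNum ℓ' d hℓ' g).testBit i =
      decide (g ⟨i % ℓ', Nat.mod_lt _ hℓ'⟩
        ⟨i / ℓ', by
          have hcomm : ℓ' * d = d * ℓ' := Nat.mul_comm ℓ' d
          rw [Nat.div_lt_iff_lt_mul hℓ']; omega⟩ = 1) := by
  have := bmc_testBit_fFFE (n := ℓ' * d)
    (fun k : Fin (ℓ' * d) =>
      g ⟨(k : ℕ) % ℓ', Nat.mod_lt _ hℓ'⟩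
        ⟨(k : ℕ) / ℓ', by
          have hk := k.isLt
          have hcomm : ℓ' * d = d * ℓ' := Nat.mul_comm ℓ' d
          rw [Nat.div_lt_iff_lt_mul hℓ']
          omega⟩) ⟨i, hi⟩
  exact this

private lemma bmcNum_testBit' (ℓ' d : ℕ) (hℓ' : 0 < ℓ') (g : Fin ℓ' → Fin d → Fin 2)
    (j : Fin ℓ') (r : Fin d) :
    (bmcNum ℓ' d hℓ' g).testBit ((r : ℕ) * ℓ' + (j : ℕ)) = decide (g j r = 1) := by
  have hi : (r : ℕ) * ℓ' + (j : ℕ) < ℓ' * d := by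
    have hr := r.isLt
    have hj := j.isLt
    calc (r : ℕ) * ℓ' + (j : ℕ) < (r : ℕ) * ℓ' + ℓ' := by omega
    _ = ((r : ℕ) + 1) * ℓ' := by ring
    _ ≤ d * ℓ' := Nat.mul_le_mul_right _ (by omega)
    _ = ℓ' * d := Nat.mul_comm _ _
  rw [bmcNum_testBit ℓ' d hℓ' g _ hi]
  have h1 : ((r : ℕ) * ℓ' + (j : ℕ)) % ℓ' = (j : ℕ) := by
    rw [Nat.mul_comm (r : ℕ) ℓ', Nat.mul_add_mod]
    exact Nat.mod_eq_of_lt j.isLt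
  have h2 : ((r : ℕ) * ℓ' + (j : ℕ)) / ℓ' = (r : ℕ) := by
    rw [Nat.mul_comm (r : ℕ) ℓ', Nat.mul_add_div hℓ', Nat.div_eq_of_lt j.isLt, Nat.add_zero]
  congr 1
  rw [show (⟨((r : ℕ) * ℓ' + (j : ℕ)) % ℓ', _⟩ : Fin ℓ') = j from Fin.ext h1,
    show (⟨((r : ℕ) * ℓ' + (j : ℕ)) / ℓ', _⟩ : Fin d) = r from Fin.ext h2]

private lemma bmcDec_bmcNum (ℓ' d : ℕ) (hℓ' : 0 < ℓ') (g : Fin ℓ' → Fin d → Fin 2) :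
    bmcDec ℓ' d (bmcNum ℓ' d hℓ' g) = g := by
  funext j r
  unfold bmcDec
  rw [bmcNum_testBit' ℓ' d hℓ' g j r]
  by_cases h : g j r = 1
  · simp [h]
  · have h0 : g j r = 0 := by
      have := (g j r).isLt
      have := Fin.ext_iff.not.1 h
      exact Fin.ext (by omega)
    simp [h, h0]

private lemma bmcNum_bmcDec (ℓ' d : ℕ) (hℓ' : 0 < ℓ') (a : ℕ) (ha : a < 2 ^ (ℓ' * d)) :
    bmcNum ℓ' d hℓ' (bmcDec ℓ' d a) = a := by
  apply Nat.eq_of_testBit_eq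
  intro i
  by_cases hi : i < ℓ' * d
  · rw [bmcNum_testBit ℓ' d hℓ' _ i hi]
    have key : bmcDec ℓ' d a ⟨i % ℓ', Nat.mod_lt _ hℓ'⟩
        ⟨i / ℓ', by
          have hcomm : ℓ' * d = d * ℓ' := Nat.mul_comm ℓ' d
          rw [Nat.div_lt_iff_lt_mul hℓ']; omega⟩ = 1 ↔ a.testBit i = true := by
      rw [bmcDec_eq_one_iff]
      have : (i / ℓ') * ℓ' + i % ℓ' = i := by
        rw [Nat.mul_comm]
        exact Nat.div_add_mod i ℓ'
      rw [this]
    by_cases h : a.testBit i = true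
    · simp [key, h]
    · simp only [Bool.not_eq_true] at h
      simp [key, h]
  · have h1 : a < 2 ^ i := lt_of_lt_of_le ha (Nat.pow_le_pow_right (by omega) (by omega))
    have h2 : bmcNum ℓ' d hℓ' (bmcDec ℓ' d a) < 2 ^ i :=
      lt_of_lt_of_le (bmcNum_lt ℓ' d hℓ' _) (Nat.pow_le_pow_right (by omega) (by omega))
    rw [Nat.testBit_lt_two_pow h1, Nat.testBit_lt_two_pow h2]

private lemma bmc_colPred_card (d : ℕ) :
    Fintype.card {p : (Fin d → Fin 2) × (Fin d → Fin 2) //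
      (∀ r, p.1 r = 1 ∨ p.2 r = 1) ∧ ((∀ r, p.1 r = 1) ∨ (∀ r, p.2 r = 1))}
      = 2 ^ (d + 1) - 1 := by
  rw [Fintype.card_subtype]
  have hiff : ∀ p : (Fin d → Fin 2) × (Fin d → Fin 2),
      ((∀ r, p.1 r = 1 ∨ p.2 r = 1) ∧ ((∀ r, p.1 r = 1) ∨ (∀ r, p.2 r = 1))) ↔
      ((∀ r, p.1 r = 1) ∨ (∀ r, p.2 r = 1)) := by
    intro p
    constructor
    · exact fun h => h.2
    · rintro (h | h)
      · exact ⟨fun r => Or.inl (h r), Or.inl h⟩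
      · exact ⟨fun r => Or.inr (h r), Or.inr h⟩
  rw [Finset.filter_congr (fun p _ => hiff p), Finset.filter_or]
  have hcard := Finset.card_union_add_card_inter
    (Finset.univ.filter (fun p : (Fin d → Fin 2) × (Fin d → Fin 2) => ∀ r, p.1 r = 1))
    (Finset.univ.filter (fun p => ∀ r, p.2 r = 1))
  have h1 : (Finset.univ.filter (fun p : (Fin d → Fin 2) × (Fin d → Fin 2) =>
      ∀ r, p.1 r = 1)).card = 2 ^ d := by
    rw [← Fintype.card_subtype]
    have e : {p : (Fin d → Fin 2) × (Fin d → Fin 2) // ∀ r, p.1 r = 1} ≃ (Fin d → Fin 2) :=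
      { toFun := fun p => p.1.2
        invFun := fun v => ⟨(fun _ => 1, v), fun _ => rfl⟩
        left_inv := by
          rintro ⟨⟨u, v⟩, h⟩
          ext x
          · exact (congrArg Fin.val (h x)).symm
          · rfl
        right_inv := fun v => rfl }
    rw [Fintype.card_congr e]
    simp [Fintype.card_fun]
  have h2 : (Finset.univ.filter (fun p : (Fin d → Fin 2) × (Fin d → Fin 2) =>
      ∀ r, p.2 r = 1)).card = 2 ^ d := by
    rw [← Fintype.card_subtype]
    have e : {p : (Fin d → Fin 2) × (Fin d → Fin 2) // ∀ r, p.2 r = 1} ≃ (Fin d → Fin 2) :=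
      { toFun := fun p => p.1.1
        invFun := fun v => ⟨(v, fun _ => 1), fun _ => rfl⟩
        left_inv := by
          rintro ⟨⟨u, v⟩, h⟩
          ext x
          · rfl
          · exact (congrArg Fin.val (h x)).symm
        right_inv := fun v => rfl }
    rw [Fintype.card_congr e]
    simp [Fintype.card_fun]
  have h3 : ((Finset.univ.filter (fun p : (Fin d → Fin 2) × (Fin d → Fin 2) =>
      ∀ r, p.1 r = 1)) ∩ (Finset.univ.filter (fun p => ∀ r, p.2 r = 1))).card = 1 := by
    rw [Finset.card_eq_one]
    refine ⟨((fun _ => 1), (fun _ => 1)), ?_⟩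
    ext ⟨u, v⟩
    simp [Prod.ext_iff, funext_iff]
  rw [h1, h2, h3] at hcard
  have hpos : 1 ≤ 2 ^ d := Nat.one_le_two_pow
  omega

open scoped Classical in
/-- Exact count of pairs `(a, b)` with `ℓ = ℓ'd` binary digits such that
(1) `a_i ∨ b_i = 1` for all `i < ℓ`, and (2) there are no `r, s < d` and
`j < ℓ'` with `b_{rℓ'+j} = a_{sℓ'+j} = 1` and `a_{rℓ'+j} = b_{sℓ'+j} = 0`:
the count is `(2^(d+1) - 1)^ℓ'`. -/
theorem bad_monomial_count_exact (ℓ' d : ℕ) (hℓ' : 1 ≤ ℓ') (hd : 1 ≤ d) :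
    ((Finset.range (2 ^ (ℓ' * d)) ×ˢ Finset.range (2 ^ (ℓ' * d))).filter (fun p =>
        (∀ i < ℓ' * d, p.1.testBit i = true ∨ p.2.testBit i = true) ∧
        (∀ r < d, ∀ s < d, ¬ ∃ j < ℓ',
          p.2.testBit (r * ℓ' + j) = true ∧ p.1.testBit (s * ℓ' + j) = true ∧
          p.1.testBit (r * ℓ' + j) = false ∧ p.2.testBit (s * ℓ' + j) = false))).card
      = (2 ^ (d + 1) - 1) ^ ℓ' := by
  have hℓ'0 : 0 < ℓ' := hℓ'
  -- the target finset of "column functions"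
  set T : Finset (Fin ℓ' → ((Fin d → Fin 2) × (Fin d → Fin 2))) :=
    Finset.univ.filter (fun H => ∀ j, (∀ r, (H j).1 r = 1 ∨ (H j).2 r = 1) ∧
      ((∀ r, (H j).1 r = 1) ∨ (∀ r, (H j).2 r = 1))) with hT
  -- key predicate transfer
  have key : ∀ a b : ℕ, a < 2 ^ (ℓ' * d) → b < 2 ^ (ℓ' * d) →
      (((∀ i < ℓ' * d, a.testBit i = true ∨ b.testBit i = true) ∧
        (∀ r < d, ∀ s < d, ¬ ∃ j < ℓ',
          b.testBit (r * ℓ' + j) = true ∧ a.testBit (s * ℓ' + j) = true ∧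
          a.testBit (r * ℓ' + j) = false ∧ b.testBit (s * ℓ' + j) = false)) ↔
      (∀ j : Fin ℓ', (∀ r : Fin d, bmcDec ℓ' d a j r = 1 ∨ bmcDec ℓ' d b j r = 1) ∧
        ((∀ r, bmcDec ℓ' d a j r = 1) ∨ (∀ r, bmcDec ℓ' d b j r = 1)))) := by
    intro a b _ _
    constructor
    · rintro ⟨h1, h2⟩ j
      constructor
      · intro r
        have hi : (r : ℕ) * ℓ' + (j : ℕ) < ℓ' * d := by
          have hr := r.isLt; have hj := j.isLt
          calc (r : ℕ) * ℓ' + (j : ℕ) < ((r : ℕ) + 1) * ℓ' := by nlinarith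
          _ ≤ d * ℓ' := Nat.mul_le_mul_right _ (by omega)
          _ = ℓ' * d := Nat.mul_comm _ _
        rcases h1 _ hi with h | h
        · exact Or.inl ((bmcDec_eq_one_iff ℓ' d a j r).2 h)
        · exact Or.inr ((bmcDec_eq_one_iff ℓ' d b j r).2 h)
      · by_contra hc
        push_neg at hc
        obtain ⟨⟨r, hr⟩, s, hs⟩ := hc
        -- from column condition (1): at r, b bit is 1; at s, a bit is 1
        have har : a.testBit ((r : ℕ) * ℓ' + (j : ℕ)) = false := by
          have := (bmcDec_eq_one_iff ℓ' d a j r).not.1 hr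
          simpa using this
        have hbs : b.testBit ((s : ℕ) * ℓ' + (j : ℕ)) = false := by
          have := (bmcDec_eq_one_iff ℓ' d b j s).not.1 hs
          simpa using this
        have hir : (r : ℕ) * ℓ' + (j : ℕ) < ℓ' * d := by
          have hr' := r.isLt; have hj := j.isLt
          calc (r : ℕ) * ℓ' + (j : ℕ) < ((r : ℕ) + 1) * ℓ' := by nlinarith
          _ ≤ d * ℓ' := Nat.mul_le_mul_right _ (by omega)
          _ = ℓ' * d := Nat.mul_comm _ _
        have his : (s : ℕ) * ℓ' + (j : ℕ) < ℓ' * d := by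
          have hs' := s.isLt; have hj := j.isLt
          calc (s : ℕ) * ℓ' + (j : ℕ) < ((s : ℕ) + 1) * ℓ' := by nlinarith
          _ ≤ d * ℓ' := Nat.mul_le_mul_right _ (by omega)
          _ = ℓ' * d := Nat.mul_comm _ _
        have hbr : b.testBit ((r : ℕ) * ℓ' + (j : ℕ)) = true := by
          rcases h1 _ hir with h | h
          · rw [h] at har; exact absurd har (by simp)
          · exact h
        have has : a.testBit ((s : ℕ) * ℓ' + (j : ℕ)) = true := by
          rcases h1 _ his with h | h
          · exact h
          · rw [h] at hbs; exact absurd hbs (by simp)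
        exact h2 r r.isLt s s.isLt ⟨j, j.isLt, hbr, has, har, hbs⟩
    · intro h
      constructor
      · intro i hi
        set j : Fin ℓ' := ⟨i % ℓ', Nat.mod_lt _ hℓ'0⟩ with hj
        set r : Fin d := ⟨i / ℓ', by
          have hcomm : ℓ' * d = d * ℓ' := Nat.mul_comm ℓ' d
          rw [Nat.div_lt_iff_lt_mul hℓ'0]; omega⟩ with hr
        have hieq : (r : ℕ) * ℓ' + (j : ℕ) = i := by
          simp only [hj, hr]
          rw [Nat.mul_comm]
          exact Nat.div_add_mod i ℓ'
        rcases (h j).1 r with hh | hh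
        · exact Or.inl (by rw [← hieq]; exact (bmcDec_eq_one_iff ℓ' d a j r).1 hh)
        · exact Or.inr (by rw [← hieq]; exact (bmcDec_eq_one_iff ℓ' d b j r).1 hh)
      · rintro r hr s hs ⟨j, hjl, hbr, has, har, hbs⟩
        set jf : Fin ℓ' := ⟨j, hjl⟩
        set rf : Fin d := ⟨r, hr⟩
        set sf : Fin d := ⟨s, hs⟩
        rcases (h jf).2 with hA | hA
        · have := (bmcDec_eq_one_iff ℓ' d a jf rf).1 (hA rf)
          rw [show ((rf : ℕ) * ℓ' + (jf : ℕ)) = r * ℓ' + j from rfl] at this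
          rw [this] at har
          exact absurd har (by simp)
        · have := (bmcDec_eq_one_iff ℓ' d b jf sf).1 (hA sf)
          rw [show ((sf : ℕ) * ℓ' + (jf : ℕ)) = s * ℓ' + j from rfl] at this
          rw [this] at hbs
          exact absurd hbs (by simp)
  -- bijection between the two filtered sets
  have hbij : ((Finset.range (2 ^ (ℓ' * d)) ×ˢ Finset.range (2 ^ (ℓ' * d))).filter (fun p =>
        (∀ i < ℓ' * d, p.1.testBit i = true ∨ p.2.testBit i = true) ∧
        (∀ r < d, ∀ s < d, ¬ ∃ j < ℓ',
          p.2.testBit (r * ℓ' + j) = true ∧ p.1.testBit (s * ℓ' + j) = true ∧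
          p.1.testBit (r * ℓ' + j) = false ∧ p.2.testBit (s * ℓ' + j) = false))).card
      = T.card := by
    apply Finset.card_bij' (i := fun p _ => fun j => (bmcDec ℓ' d p.1 j, bmcDec ℓ' d p.2 j))
      (j := fun H _ => (bmcNum ℓ' d hℓ'0 (fun j => (H j).1), bmcNum ℓ' d hℓ'0 (fun j => (H j).2)))
    · intro p hp
      rw [Finset.mem_filter, Finset.mem_product, Finset.mem_range, Finset.mem_range] at hp
      obtain ⟨⟨ha, hb⟩, hP⟩ := hp
      rw [hT, Finset.mem_filter]
      exact ⟨Finset.mem_univ _, (key p.1 p.2 ha hb).1 hP⟩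
    · intro H hH
      rw [hT, Finset.mem_filter] at hH
      rw [Finset.mem_filter, Finset.mem_product, Finset.mem_range, Finset.mem_range]
      refine ⟨⟨?_, ?_⟩, ?_⟩
      · show bmcNum ℓ' d hℓ'0 (fun j => (H j).1) < 2 ^ (ℓ' * d)
        exact bmcNum_lt ℓ' d hℓ'0 _
      · show bmcNum ℓ' d hℓ'0 (fun j => (H j).2) < 2 ^ (ℓ' * d)
        exact bmcNum_lt ℓ' d hℓ'0 _
      simp only
      apply (key _ _ (bmcNum_lt ℓ' d hℓ'0 _) (bmcNum_lt ℓ' d hℓ'0 _)).2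
      intro j
      rw [bmcDec_bmcNum ℓ' d hℓ'0 (fun j => (H j).1), bmcDec_bmcNum ℓ' d hℓ'0 (fun j => (H j).2)]
      exact hH.2 j
    · intro p hp
      rw [Finset.mem_filter, Finset.mem_product, Finset.mem_range, Finset.mem_range] at hp
      obtain ⟨⟨ha, hb⟩, _⟩ := hp
      show (bmcNum ℓ' d hℓ'0 (bmcDec ℓ' d p.1), bmcNum ℓ' d hℓ'0 (bmcDec ℓ' d p.2)) = p
      rw [bmcNum_bmcDec ℓ' d hℓ'0 p.1 ha, bmcNum_bmcDec ℓ' d hℓ'0 p.2 hb]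
    · intro H hH
      funext j
      show (bmcDec ℓ' d (bmcNum ℓ' d hℓ'0 (fun j => (H j).1)) j,
            bmcDec ℓ' d (bmcNum ℓ' d hℓ'0 (fun j => (H j).2)) j) = H j
      rw [bmcDec_bmcNum ℓ' d hℓ'0 (fun j => (H j).1), bmcDec_bmcNum ℓ' d hℓ'0 (fun j => (H j).2)]
  rw [hbij]
  -- count T
  rw [hT, ← Fintype.card_subtype]
  have e2 : {H : Fin ℓ' → ((Fin d → Fin 2) × (Fin d → Fin 2)) //
      ∀ j, (∀ r, (H j).1 r = 1 ∨ (H j).2 r = 1) ∧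
        ((∀ r, (H j).1 r = 1) ∨ (∀ r, (H j).2 r = 1))} ≃
      (Fin ℓ' → {p : (Fin d → Fin 2) × (Fin d → Fin 2) //
        (∀ r, p.1 r = 1 ∨ p.2 r = 1) ∧ ((∀ r, p.1 r = 1) ∨ (∀ r, p.2 r = 1))}) :=
    Equiv.subtypePiEquivPi (p := fun (_ : Fin ℓ') (p : (Fin d → Fin 2) × (Fin d → Fin 2)) =>
      (∀ r, p.1 r = 1 ∨ p.2 r = 1) ∧ ((∀ r, p.1 r = 1) ∨ (∀ r, p.2 r = 1)))
  rw [Fintype.card_congr e2, Fintype.card_fun, bmc_colPred_card, Fintype.card_fin]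
end

section
/- Fix ℓ' ≥ 1 and d ≥ 1 and set m = (2^{ℓ'd} − 1)/(2^{ℓ'} − 1). Let 0 ≤ a, b ≤ 2^{ℓ'd} − 1 with a ∨ b = 2^{ℓ'd} − 1 (bitwise OR). Then there exists a nonnegative integer i with i ≡ b (mod m) and i ≤₂ a ∧ b if and only if for every r, s ∈ {0, …, d−1} there is no j ∈ {0, …, ℓ'−1} with b_{rℓ'+j} = a_{sℓ'+j} = 1 and a_{rℓ'+j} = b_{sℓ'+j} = 0. -/
lemma aux_sum_range_pow (n : ℕ) : ∑ p ∈ Finset.range n, 2^p = 2^n - 1 := by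
  induction n with
  | zero => simp
  | succ n ih =>
    rw [Finset.sum_range_succ, ih]
    have h1 : 0 < 2^n := Nat.two_pow_pos n
    have h2 : 2^(n+1) = 2 * 2^n := by rw [pow_succ]; ring
    omega

lemma aux_testBit_sum : ∀ (n : ℕ) (s : Finset ℕ), s ⊆ Finset.range n →
    ∀ k, (∑ p ∈ s, 2^p).testBit k = decide (k ∈ s) := by
  intro n
  induction n with
  | zero =>
    intro s hs k
    have : s = ∅ := Finset.subset_empty.mp (by simpa using hs)
    subst this; simp
  | succ n ih =>
    intro s hs k
    by_cases hn : n ∈ s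
    · have hsub : s.erase n ⊆ Finset.range n := by
        intro x hx
        have hx1 := Finset.mem_of_mem_erase hx
        have hx2 := Finset.ne_of_mem_erase hx
        have := Finset.mem_range.mp (hs hx1)
        exact Finset.mem_range.mpr (by omega)
      have hsum : ∑ p ∈ s, 2^p = 2^n * 1 + ∑ p ∈ s.erase n, 2^p := by
        rw [← Finset.add_sum_erase _ _ hn]; ring
      have hlt : ∑ p ∈ s.erase n, 2^p < 2^n := by
        have h1 : ∑ p ∈ s.erase n, 2^p ≤ ∑ p ∈ Finset.range n, 2^p :=
          Finset.sum_le_sum_of_subset hsub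
        rw [aux_sum_range_pow] at h1
        have := Nat.two_pow_pos n
        omega
      rw [hsum, Nat.testBit_two_pow_mul_add 1 hlt k]
      by_cases hk : k < n
      · rw [if_pos hk, ih _ hsub k]
        have : (k ∈ s.erase n) ↔ (k ∈ s) := by
          rw [Finset.mem_erase]
          constructor
          · exact fun h => h.2
          · exact fun h => ⟨by omega, h⟩
        simp [this]
      · rw [if_neg hk]
        by_cases hkn : k = n
        · subst hkn
          simp only [Nat.sub_self]
          simp [hn]
        · have h1 : Nat.testBit 1 (k - n) = false := by
            rw [← Bool.not_eq_true, Nat.testBit_one_eq_true_iff_self_eq_zero]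
            omega
          have h2 : k ∉ s := by
            intro hk2
            have := Finset.mem_range.mp (hs hk2)
            omega
          simp [h1, h2]
    · have hsub : s ⊆ Finset.range n := by
        intro x hx
        have h1 := Finset.mem_range.mp (hs hx)
        have h2 : x ≠ n := fun h => hn (h ▸ hx)
        exact Finset.mem_range.mpr (by omega)
      exact ih s hsub k

lemma aux_geom (ℓ' d : ℕ) :
    (∑ k ∈ Finset.range d, 2^(k*ℓ')) * (2^ℓ' - 1) + 1 = 2^(ℓ'*d) := by
  induction d with
  | zero => simp
  | succ d ih =>
    rw [Finset.sum_range_succ, Nat.add_mul]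
    have h1 : 0 < 2^ℓ' := Nat.two_pow_pos ℓ'
    have h2 : (2:ℕ)^(d*ℓ') = 2^(ℓ'*d) := by rw [mul_comm]
    have h3 : (2:ℕ)^(ℓ'*(d+1)) = 2^(ℓ'*d) * 2^ℓ' := by rw [← pow_add]; ring_nf
    have h4 : (2:ℕ)^(d*ℓ')*(2^ℓ'-1) = 2^(ℓ'*d)*2^ℓ' - 2^(ℓ'*d) := by
      rw [h2, Nat.mul_sub, mul_one]
    have h5 : 2^(ℓ'*d) ≤ 2^(ℓ'*d)*2^ℓ' := Nat.le_mul_of_pos_right _ h1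
    omega

lemma aux_mul_lt (ℓ' d t : ℕ) (ht : t < 2^ℓ') :
    (∑ k ∈ Finset.range d, 2^(k*ℓ')) * t < 2^(ℓ'*d) := by
  have h := aux_geom ℓ' d
  have h1 : (∑ k ∈ Finset.range d, 2^(k*ℓ')) * t
      ≤ (∑ k ∈ Finset.range d, 2^(k*ℓ')) * (2^ℓ' - 1) :=
    Nat.mul_le_mul_left _ (by omega)
  omega

lemma aux_pattern (ℓ' : ℕ) (t : ℕ) (ht : t < 2^ℓ') (d : ℕ) :
    ∀ p, ((∑ k ∈ Finset.range d, 2^(k*ℓ')) * t).testBit p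
      = (decide (p < ℓ'*d) && t.testBit (p % ℓ')) := by
  induction d with
  | zero => intro p; simp
  | succ d ih =>
    intro p
    rw [Finset.sum_range_succ, Nat.add_mul]
    have hlt : (∑ k ∈ Finset.range d, 2^(k*ℓ')) * t < 2^(ℓ'*d) := aux_mul_lt ℓ' d t ht
    have hrw : (∑ k ∈ Finset.range d, 2^(k*ℓ'))*t + 2^(d*ℓ')*t
        = 2^(ℓ'*d) * t + (∑ k ∈ Finset.range d, 2^(k*ℓ'))*t := by
      rw [mul_comm d ℓ']; ring
    rw [hrw, Nat.testBit_two_pow_mul_add t hlt p]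
    by_cases hp : p < ℓ'*d
    · rw [if_pos hp, ih p]
      have hp2 : p < ℓ'*(d+1) := lt_of_lt_of_le hp (Nat.mul_le_mul_left _ (by omega))
      simp [hp, hp2]
    · rw [if_neg hp]
      push_neg at hp
      have hexp : ℓ'*(d+1) = ℓ'*d + ℓ' := by ring
      by_cases hp2 : p < ℓ'*(d+1)
      · have hq : p - ℓ'*d < ℓ' := by omega
        have hpform : p = (p - ℓ'*d) + ℓ'*d := by omega
        have hmod : p % ℓ' = p - ℓ'*d := by
          conv_lhs => rw [hpform]
          rw [Nat.add_mul_mod_self_left, Nat.mod_eq_of_lt hq]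
        simp [hp2, hmod]
      · have hge : ℓ' ≤ p - ℓ'*d := by omega
        have htlt : t < 2^(p-ℓ'*d) :=
          lt_of_lt_of_le ht (Nat.pow_le_pow_right (by norm_num) hge)
        rw [Nat.testBit_lt_two_pow htlt]
        simp [hp2]

lemma aux_testBit_lt {x p L : ℕ} (hx : x ≤ 2^L - 1) (h : x.testBit p = true) : p < L := by
  have h1 := Nat.ge_two_pow_of_testBit h
  by_contra hc
  push_neg at hc
  have h2 : (2:ℕ)^L ≤ 2^p := Nat.pow_le_pow_right (by norm_num) hc
  have := Nat.two_pow_pos L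
  omega

lemma aux_sub_bits (b i : ℕ) (h : ∀ p, i.testBit p = true → b.testBit p = true) (p : ℕ) :
    (b - i).testBit p = (b.testBit p && !(i.testBit p)) := by
  classical
  have hbn : b < 2 ^ b := Nat.lt_two_pow_self
  have hbit : ∀ q, b.testBit q = true → q < b := by
    intro q hq
    have h1 := Nat.ge_two_pow_of_testBit hq
    by_contra hc
    push_neg at hc
    have : (2:ℕ)^b ≤ 2^q := Nat.pow_le_pow_right (by norm_num) hc
    omega
  set s := (Finset.range b).filter (fun q => b.testBit q = true) with hsdef
  set u := (Finset.range b).filter (fun q => i.testBit q = true) with hudef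
  have hmem_s : ∀ q, q ∈ s ↔ b.testBit q = true := by
    intro q
    simp only [hsdef, Finset.mem_filter, Finset.mem_range]
    exact ⟨fun h => h.2, fun h => ⟨hbit q h, h⟩⟩
  have hmem_u : ∀ q, q ∈ u ↔ i.testBit q = true := by
    intro q
    simp only [hudef, Finset.mem_filter, Finset.mem_range]
    exact ⟨fun h => h.2, fun hq => ⟨hbit q (h q hq), hq⟩⟩
  have hssub : s ⊆ Finset.range b := Finset.filter_subset _ _
  have husub : u ⊆ Finset.range b := Finset.filter_subset _ _
  have hb : b = ∑ q ∈ s, 2^q := by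
    apply Nat.eq_of_testBit_eq
    intro q
    rw [aux_testBit_sum b s hssub q]
    by_cases hq : b.testBit q = true
    · simp [hq, (hmem_s q).mpr hq]
    · have hq' : b.testBit q = false := by
        cases hqq : b.testBit q
        · rfl
        · exact absurd hqq hq
      have : q ∉ s := fun hmem => hq ((hmem_s q).mp hmem)
      simp [hq', this]
  have hi : i = ∑ q ∈ u, 2^q := by
    apply Nat.eq_of_testBit_eq
    intro q
    rw [aux_testBit_sum b u husub q]
    by_cases hq : i.testBit q = true
    · simp [hq, (hmem_u q).mpr hq]
    · have hq' : i.testBit q = false := by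
        cases hqq : i.testBit q
        · rfl
        · exact absurd hqq hq
      have : q ∉ u := fun hmem => hq ((hmem_u q).mp hmem)
      simp [hq', this]
  have hus : u ⊆ s := by
    intro q hq
    exact (hmem_s q).mpr (h q ((hmem_u q).mp hq))
  have hsd : ∑ q ∈ s \ u, 2^q + ∑ q ∈ u, 2^q = ∑ q ∈ s, 2^q := Finset.sum_sdiff hus
  have hbi : b - i = ∑ q ∈ s \ u, 2^q := by omega
  rw [hbi, aux_testBit_sum b (s \ u) (fun q hq => hssub (Finset.mem_sdiff.mp hq).1) p]
  by_cases hps : p ∈ s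
  · by_cases hpu : p ∈ u
    · have h1 : p ∉ s \ u := by simp [Finset.mem_sdiff, hpu]
      simp [h1, (hmem_u p).mp hpu]
    · have h1 : p ∈ s \ u := Finset.mem_sdiff.mpr ⟨hps, hpu⟩
      have h2 : i.testBit p = false := by
        cases hqq : i.testBit p
        · rfl
        · exact absurd ((hmem_u p).mpr hqq) hpu
      simp [h1, (hmem_s p).mp hps, h2]
  · have h1 : p ∉ s \ u := by simp [Finset.mem_sdiff, hps]
    have h2 : b.testBit p = false := by
      cases hqq : b.testBit p
      · rfl
      · exact absurd ((hmem_s p).mpr hqq) hps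
    simp [h1, h2]

lemma aux_pos_lt {r ℓ' d j : ℕ} (hr : r < d) (hj : j < ℓ') : r*ℓ'+j < ℓ'*d := by
  calc r*ℓ'+j < r*ℓ' + ℓ' := by omega
  _ = (r+1)*ℓ' := by ring
  _ ≤ d*ℓ' := Nat.mul_le_mul_right _ hr
  _ = ℓ'*d := mul_comm _ _

/-- With `m = 1 + 2^ℓ' + ⋯ + 2^((d-1)ℓ')` and `a ||| b = 2^(ℓ'd) - 1`, there is a
nonnegative integer `i ≡ b (mod m)` with `i ≤₂ a &&& b` iff for every
`r, s < d` there is no `j < ℓ'` with `b_{rℓ'+j} = a_{sℓ'+j} = 1` and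
`a_{rℓ'+j} = b_{sℓ'+j} = 0`. -/
theorem shadow_exists_iff_block_condition (ℓ' d a b : ℕ) (hℓ' : 1 ≤ ℓ') (hd : 1 ≤ d)
    (ha : a ≤ 2 ^ (ℓ' * d) - 1) (hb : b ≤ 2 ^ (ℓ' * d) - 1)
    (hor : a ||| b = 2 ^ (ℓ' * d) - 1) :
    (∃ i : ℕ, i % (∑ k ∈ Finset.range d, 2 ^ (k * ℓ')) = b % (∑ k ∈ Finset.range d, 2 ^ (k * ℓ')) ∧
        ∀ j, i.testBit j = true → (a &&& b).testBit j = true) ↔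
      (∀ r < d, ∀ s < d, ¬ ∃ j < ℓ',
        b.testBit (r * ℓ' + j) = true ∧ a.testBit (s * ℓ' + j) = true ∧
        a.testBit (r * ℓ' + j) = false ∧ b.testBit (s * ℓ' + j) = false) := by
  classical
  set M := ∑ k ∈ Finset.range d, 2 ^ (k * ℓ') with hMdef
  have hgeom := aux_geom ℓ' d
  rw [← hMdef] at hgeom
  have hLpos : 1 ≤ ℓ' * d := Nat.one_le_iff_ne_zero.mpr (by positivity)
  have hL2 : 2 ≤ 2^(ℓ'*d) := by
    calc (2:ℕ) = 2^1 := rfl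
    _ ≤ 2^(ℓ'*d) := Nat.pow_le_pow_right (by norm_num) hLpos
  have hMpos : 1 ≤ M := by
    rcases Nat.eq_zero_or_pos M with h0 | h1
    · rw [h0] at hgeom; simp at hgeom; omega
    · exact h1
  constructor
  · rintro ⟨i, hmod, hsub⟩ r hr s hs ⟨j, hj, hbr, has, har, hbs⟩
    have hsubb : ∀ p, i.testBit p = true → b.testBit p = true := by
      intro p hp
      have h1 := hsub p hp
      rw [Nat.testBit_and] at h1
      exact (Bool.and_eq_true _ _ |>.mp h1).2
    have hsuba : ∀ p, i.testBit p = true → a.testBit p = true := by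
      intro p hp
      have h1 := hsub p hp
      rw [Nat.testBit_and] at h1
      exact (Bool.and_eq_true _ _ |>.mp h1).1
    have hib : i ≤ b := Nat.le_of_testBit hsubb
    have hdvd : M ∣ b - i := (Nat.modEq_iff_dvd' hib).mp hmod
    obtain ⟨t, ht⟩ := hdvd
    have htlt : t < 2^ℓ' := by
      have h1 : M * t ≤ 2^(ℓ'*d) - 1 := by omega
      by_contra hc
      push_neg at hc
      have h2 : M * 2^ℓ' ≤ M * t := Nat.mul_le_mul_left _ hc
      have h3 : M * 2^ℓ' = M * (2^ℓ' - 1) + M := by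
        have h4 := Nat.two_pow_pos ℓ'
        have := Nat.mul_pred M (2^ℓ')
        have h5 : M ≤ M * 2^ℓ' := Nat.le_mul_of_pos_right _ h4
        simp only [Nat.pred_eq_sub_one] at this
        omega
      omega
    have hbits := aux_sub_bits b i hsubb
    have hi1 : i.testBit (r*ℓ'+j) = false := by
      cases hq : i.testBit (r*ℓ'+j)
      · rfl
      · rw [hsuba _ hq] at har; exact absurd har (by simp)
    have hp1 : (b - i).testBit (r*ℓ'+j) = true := by
      rw [hbits]; simp [hbr, hi1]
    have hi2 : i.testBit (s*ℓ'+j) = false := by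
      cases hq : i.testBit (s*ℓ'+j)
      · rfl
      · rw [hsubb _ hq] at hbs; exact absurd hbs (by simp)
    have hp2 : (b - i).testBit (s*ℓ'+j) = false := by
      rw [hbits]; simp [hbs]
    rw [ht, aux_pattern ℓ' t htlt d (r*ℓ'+j)] at hp1
    rw [ht, aux_pattern ℓ' t htlt d (s*ℓ'+j)] at hp2
    have hmod1 : (r*ℓ'+j) % ℓ' = j := by
      rw [mul_comm r ℓ', Nat.mul_add_mod, Nat.mod_eq_of_lt hj]
    have hmod2 : (s*ℓ'+j) % ℓ' = j := by
      rw [mul_comm s ℓ', Nat.mul_add_mod, Nat.mod_eq_of_lt hj]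
    have hlt1 : r*ℓ'+j < ℓ'*d := aux_pos_lt hr hj
    have hlt2 : s*ℓ'+j < ℓ'*d := aux_pos_lt hs hj
    rw [hmod1] at hp1
    rw [hmod2] at hp2
    simp [hlt1] at hp1
    simp [hlt2, hp1] at hp2
  · intro hcond
    set S := (Finset.range ℓ').filter
      (fun j => ∃ r ∈ Finset.range d, b.testBit (r*ℓ'+j) = true ∧ a.testBit (r*ℓ'+j) = false)
      with hSdef
    set c := ∑ j ∈ S, 2^j with hcdef
    have hcS : ∀ q, c.testBit q = decide (q ∈ S) :=
      fun q => aux_testBit_sum ℓ' S (Finset.filter_subset _ _) q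
    have hclt : c < 2^ℓ' := by
      have h1 : c ≤ ∑ j ∈ Finset.range ℓ', 2^j :=
        Finset.sum_le_sum_of_subset (Finset.filter_subset _ _)
      rw [aux_sum_range_pow] at h1
      have := Nat.two_pow_pos ℓ'
      omega
    have hDbit := aux_pattern ℓ' c hclt d
    have horbit : ∀ p, p < ℓ'*d → (a.testBit p = true ∨ b.testBit p = true) := by
      intro p hp
      have h1 := congrArg (fun x => Nat.testBit x p) hor
      simp only [Nat.testBit_or, Nat.testBit_two_pow_sub_one] at h1
      rw [decide_eq_true hp] at h1
      rcases Bool.or_eq_true _ _ |>.mp h1 with h | h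
      · exact Or.inl h
      · exact Or.inr h
    have hDb : ∀ p, (M*c).testBit p = true → b.testBit p = true := by
      intro p hp
      rw [hDbit p] at hp
      obtain ⟨hpL', hcp⟩ := Bool.and_eq_true _ _ |>.mp hp
      have hpL : p < ℓ'*d := of_decide_eq_true hpL'
      rw [hcS] at hcp
      have hmem : p % ℓ' ∈ S := of_decide_eq_true hcp
      rw [hSdef, Finset.mem_filter] at hmem
      obtain ⟨-, r', hr'd, hbr', har'⟩ := hmem
      by_contra hbp
      have hbp' : b.testBit p = false := by
        cases hq : b.testBit p
        · rfl
        · exact absurd hq hbp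
      have hap : a.testBit p = true := by
        rcases horbit p hpL with h | h
        · exact h
        · rw [h] at hbp'; exact absurd hbp' (by simp)
      have hdiv : p / ℓ' < d := by
        rw [Nat.div_lt_iff_lt_mul (by omega), mul_comm d ℓ']
        exact hpL
      have hpform : (p/ℓ')*ℓ' + p%ℓ' = p := by
        rw [mul_comm]; exact Nat.div_add_mod p ℓ'
      exact hcond r' (Finset.mem_range.mp hr'd) (p/ℓ') hdiv
        ⟨p%ℓ', Nat.mod_lt _ (by omega), hbr', by rw [hpform]; exact hap, har',
          by rw [hpform]; exact hbp'⟩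
    have hDle : M*c ≤ b := Nat.le_of_testBit hDb
    refine ⟨b - M*c, ?_, ?_⟩
    · conv_rhs => rw [← Nat.sub_add_cancel hDle]
      rw [Nat.add_mul_mod_self_left]
    · intro p hp
      rw [aux_sub_bits b (M*c) hDb p] at hp
      obtain ⟨hbp, hDp'⟩ := Bool.and_eq_true _ _ |>.mp hp
      have hDp : (M*c).testBit p = false := by
        cases hq : (M*c).testBit p
        · rfl
        · rw [hq] at hDp'; exact absurd hDp' (by simp)
      rw [Nat.testBit_and]
      have hpL : p < ℓ'*d := aux_testBit_lt hb hbp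
      have hap : a.testBit p = true := by
        by_contra hap
        have hap' : a.testBit p = false := by
          cases hq : a.testBit p
          · rfl
          · exact absurd hq hap
        have hdiv : p / ℓ' < d := by
          rw [Nat.div_lt_iff_lt_mul (by omega), mul_comm d ℓ']
          exact hpL
        have hpform : (p/ℓ')*ℓ' + p%ℓ' = p := by
          rw [mul_comm]; exact Nat.div_add_mod p ℓ'
        have hmem : p % ℓ' ∈ S := by
          rw [hSdef, Finset.mem_filter]
          refine ⟨Finset.mem_range.mpr (Nat.mod_lt _ (by omega)),
            p/ℓ', Finset.mem_range.mpr hdiv, ?_, ?_⟩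
          · rw [hpform]; exact hbp
          · rw [hpform]; exact hap'
        have : (M*c).testBit p = true := by
          rw [hDbit p, hcS]
          simp [hpL, hmem]
        rw [this] at hDp
        exact absurd hDp (by simp)
      simp [hap, hbp]
end

section
/- Let q = 2^ℓ, let H ≤ F_q^× be a subgroup, g ∈ F_q^×, and let a, b be integers with 0 < a, b ≤ q − 1 and a + b < 2(q − 1). If the bitwise OR of a and b is not equal to q − 1, then for every point (x, y) ∈ F_q², the sum over α ∈ H and T ∈ F_q of T^a (gα(T − x) + y)^b equals 0 in F_q. -/
private lemma choose_odd_testBit :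
    ∀ (i b j : ℕ), Odd (Nat.choose b j) → j.testBit i = true → b.testBit i = true := by
  haveI : Fact (Nat.Prime 2) := ⟨Nat.prime_two⟩
  intro i
  induction i with
  | zero =>
    intro b j hodd hj
    have hmod := (Choose.choose_modEq_choose_mod_mul_choose_div_nat (p := 2) (n := b) (k := j))
    rw [Nat.ModEq] at hmod
    rw [Nat.odd_iff] at hodd
    rw [Nat.testBit_zero] at hj ⊢
    simp only [decide_eq_true_eq] at hj ⊢
    by_contra hb
    have hb0 : b % 2 = 0 := by omega
    rw [hb0, hj] at hmod
    simp [Nat.choose] at hmod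
    omega
  | succ i ih =>
    intro b j hodd hj
    have hmod := (Choose.choose_modEq_choose_mod_mul_choose_div_nat (p := 2) (n := b) (k := j))
    rw [Nat.ModEq] at hmod
    rw [Nat.odd_iff] at hodd
    have h2 : Odd (Nat.choose (b / 2) (j / 2)) := by
      rw [Nat.odd_iff]
      rw [hodd, Nat.mul_mod] at hmod
      rcases Nat.mod_two_eq_zero_or_one (Nat.choose (b / 2) (j / 2)) with h | h
      · rw [h] at hmod; simp at hmod
      · exact h
    rw [Nat.testBit_succ] at hj ⊢
    exact ih _ _ h2 hj

private lemma sum_pow_eq_zero' (K : Type*) [Field K] [Fintype K] (n : ℕ)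
    (hn0 : 0 < n) (hn2 : n < 2 * (Fintype.card K - 1)) (hne : n ≠ Fintype.card K - 1) :
    ∑ x : K, x ^ n = 0 := by
  rcases lt_or_gt_of_ne hne with h | h
  · exact FiniteField.sum_pow_lt_card_sub_one K n h
  · have hq2 : 2 ≤ Fintype.card K := Fintype.one_lt_card
    set m := n - (Fintype.card K - 1) with hm
    have hm0 : 0 < m := by omega
    have hmlt : m < Fintype.card K - 1 := by omega
    have : ∑ x : K, x ^ n = ∑ x : K, x ^ m := by
      refine Finset.sum_congr rfl fun x _ => ?_
      rcases eq_or_ne x 0 with rfl | hx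
      · rw [zero_pow (by omega), zero_pow (by omega)]
      · have : n = m + (Fintype.card K - 1) := by omega
        rw [this, pow_add, FiniteField.pow_card_sub_one_eq_one x hx, mul_one]
    rw [this]
    exact FiniteField.sum_pow_lt_card_sub_one K m hmlt

/-- If `a ||| b ≠ q - 1`, then the wedge restriction of the monomial `X^a Y^b`
vanishes: for every `(x, y) ∈ F_q²`, `∑_{α ∈ H} ∑_{T ∈ F_q} T^a (gα(T-x)+y)^b = 0`. -/
theorem wedge_restriction_vanishes_of_or_ne (F : Type*) [Field F] [Fintype F]
    (ℓ : ℕ) (hcard : Fintype.card F = 2 ^ ℓ)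
    (H : Subgroup Fˣ) (g : Fˣ) (a b : ℕ)
    (ha0 : 0 < a) (hb0 : 0 < b)
    (ha : a ≤ Fintype.card F - 1) (hb : b ≤ Fintype.card F - 1)
    (hab : a + b < 2 * (Fintype.card F - 1))
    (hor : a ||| b ≠ Fintype.card F - 1) :
    ∀ x y : F,
      (∑ᶠ α ∈ (H : Set Fˣ), ∑ T : F, T ^ a * ((g : F) * (α : F) * (T - x) + y) ^ b) = 0 := by
  intro x y
  have hq2 : 2 ≤ Fintype.card F := Fintype.one_lt_card
  have hℓ0 : ℓ ≠ 0 := by rintro rfl; rw [hcard] at hq2; norm_num at hq2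
  -- characteristic 2
  have hcast : ((Fintype.card F : ℕ) : F) = 0 := FiniteField.cast_card_eq_zero F
  have h2 : (2 : F) = 0 := by
    rw [hcard] at hcast
    push_cast at hcast
    exact pow_eq_zero_iff hℓ0 |>.mp hcast
  have halt : a < 2 ^ ℓ := by omega
  have hblt : b < 2 ^ ℓ := by omega
  -- the key binomial coefficient is even
  set j₀ := Fintype.card F - 1 - a with hj₀
  have hkey : ¬ Odd (Nat.choose b j₀) := by
    intro hodd
    apply hor
    apply Nat.eq_of_testBit_eq
    intro i
    rw [Nat.testBit_or, hcard, Nat.testBit_two_pow_sub_one]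
    by_cases hi : i < ℓ
    · simp only [hi, decide_true]
      rcases Bool.eq_false_or_eq_true (a.testBit i) with hA | hA
      · rw [hA]; simp
      · have hj : j₀.testBit i = true := by
          have hrw : j₀ = 2 ^ ℓ - (a + 1) := by omega
          rw [hrw, Nat.testBit_two_pow_sub_succ halt]
          simp [hi, hA]
        rw [choose_odd_testBit i b j₀ hodd hj, hA]
        simp
    · simp only [hi, decide_false]
      have h2i : 2 ^ ℓ ≤ 2 ^ i := Nat.pow_le_pow_right (by norm_num) (by omega)
      rw [Nat.testBit_lt_two_pow (by omega), Nat.testBit_lt_two_pow (by omega)]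
      simp
  have hchoose : ((Nat.choose b j₀ : ℕ) : F) = 0 := by
    rw [Nat.not_odd_iff_even] at hkey
    obtain ⟨k, hk⟩ := hkey
    rw [hk]
    push_cast
    rw [← two_mul, h2, zero_mul]
  -- inner sum vanishes for every unit α
  have hinner : ∀ α : Fˣ, (∑ T : F, T ^ a * ((g : F) * (α : F) * (T - x) + y) ^ b) = 0 := by
    intro α
    set c : F := (g : F) * (α : F) with hc
    set d : F := y - c * x with hd
    have hrw : ∀ T : F, (g : F) * (α : F) * (T - x) + y = c * T + d := by
      intro T; rw [hc, hd]; ring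
    calc ∑ T : F, T ^ a * ((g : F) * (α : F) * (T - x) + y) ^ b
        = ∑ T : F, ∑ k ∈ Finset.range (b + 1),
            c ^ k * d ^ (b - k) * (Nat.choose b k : F) * T ^ (a + k) := by
          refine Finset.sum_congr rfl fun T _ => ?_
          rw [hrw T, add_pow, Finset.mul_sum]
          refine Finset.sum_congr rfl fun k _ => ?_
          rw [mul_pow, pow_add]; ring
      _ = ∑ k ∈ Finset.range (b + 1),
            c ^ k * d ^ (b - k) * (Nat.choose b k : F) * ∑ T : F, T ^ (a + k) := by
          rw [Finset.sum_comm]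
          exact Finset.sum_congr rfl fun k _ => (Finset.mul_sum _ _ _).symm
      _ = 0 := by
          refine Finset.sum_eq_zero fun k hk => ?_
          rw [Finset.mem_range] at hk
          by_cases hcase : a + k = Fintype.card F - 1
          · have : k = j₀ := by omega
            rw [this, hchoose, mul_zero, zero_mul]
          · rw [sum_pow_eq_zero' F (a + k) (by omega) (by omega) hcase, mul_zero]
  simp only [hinner]
  simp
end

section
/- For a dyadic rational α = a'/2^{b'} ∈ (0, 1/2), write 1 − 2α = a/2^b with a = (a_{b−1}…a_0)_2. For every positive integer n, setting q = 2^{2^b n} and h = Π_{i : a_i = 1} (2^{2^i n} + 1), we have that h divides q − 1 and h = Θ(2^{an}); consequently (q − 1)/h = Θ(q^{2α}). -/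
lemma bits_sum : ∀ b a : ℕ, a < 2 ^ b →
    ∑ i ∈ Finset.range b, (if a.testBit i then 2 ^ i else 0) = a := by
  intro b
  induction b with
  | zero => intro a ha; interval_cases a; simp
  | succ b ih =>
    intro a ha
    have hp : (2:ℕ) ^ (b + 1) = 2 * 2 ^ b := by ring
    rw [Finset.sum_range_succ']
    have h1 : ∀ i, (if a.testBit (i + 1) then 2 ^ (i + 1) else 0)
        = 2 * (if (a / 2).testBit i then 2 ^ i else 0) := by
      intro i
      rw [Nat.testBit_succ]
      split <;> ring
    simp only [h1, ← Finset.mul_sum]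
    rw [ih (a / 2) (by omega)]
    rw [pow_zero, Nat.testBit_zero]
    rcases Nat.mod_two_eq_zero_or_one a with h | h <;> simp [h] <;> omega

lemma full_prod (b n : ℕ) :
    (2 ^ n - 1) * ∏ i ∈ Finset.range b, (2 ^ (2 ^ i * n) + 1) = 2 ^ (2 ^ b * n) - 1 := by
  induction b with
  | zero => simp
  | succ b ih =>
    rw [Finset.prod_range_succ, ← mul_assoc, ih]
    obtain ⟨y, hy⟩ : ∃ y, 2 ^ (2 ^ b * n) = y + 1 :=
      ⟨2 ^ (2 ^ b * n) - 1, by have := Nat.one_le_two_pow (n := 2 ^ b * n); omega⟩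
    have he : 2 ^ (2 ^ (b + 1) * n) = 2 ^ (2 ^ b * n) * 2 ^ (2 ^ b * n) := by
      rw [← pow_add]; ring_nf
    rw [he, hy]
    have h2 : (y + 1 - 1) * (y + 1 + 1) = y * (y + 2) := by
      rw [Nat.add_sub_cancel]
    have h3 : (y + 1) * (y + 1) = y * (y + 2) + 1 := by ring
    rw [h2]
    omega

/-- `h(n) = ∏_{i : a_i = 1} (2^{2^i n} + 1)`. -/
def wedgeSubgroupOrder (a b n : ℕ) : ℕ :=
  ∏ i ∈ (Finset.range b).filter (fun i => a.testBit i), (2 ^ (2 ^ i * n) + 1)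

/-- For a dyadic rational `α = a'/2^{b'} ∈ (0, 1/2)` with `1 - 2α = a/2^b`, and
`q = 2^{2^b n}`, `h = ∏_{i : a_i = 1}(2^{2^i n} + 1)`: `h ∣ q - 1`,
`h = Θ(2^{an})`, and `(q-1)/h = Θ(2^{(2^b - a)n}) = Θ(q^{2α})`. -/
theorem dyadic_subgroup_construction (α : ℝ) (a b : ℕ)
    (hα0 : 0 < α) (hα2 : α < 1 / 2)
    (hab : 1 - 2 * α = (a : ℝ) / 2 ^ b) :
    (∀ n : ℕ, 1 ≤ n → wedgeSubgroupOrder a b n ∣ 2 ^ (2 ^ b * n) - 1) ∧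
    (∃ c₁ c₂ : ℝ, 0 < c₁ ∧ 0 < c₂ ∧ ∀ n : ℕ, 1 ≤ n →
      c₁ * 2 ^ (a * n) ≤ (wedgeSubgroupOrder a b n : ℝ) ∧
      (wedgeSubgroupOrder a b n : ℝ) ≤ c₂ * 2 ^ (a * n)) ∧
    (∃ c₁ c₂ : ℝ, 0 < c₁ ∧ 0 < c₂ ∧ ∀ n : ℕ, 1 ≤ n →
      c₁ * 2 ^ ((2 ^ b - a) * n) ≤ (((2 ^ (2 ^ b * n) - 1) / wedgeSubgroupOrder a b n : ℕ) : ℝ) ∧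
      (((2 ^ (2 ^ b * n) - 1) / wedgeSubgroupOrder a b n : ℕ) : ℝ) ≤ c₂ * 2 ^ ((2 ^ b - a) * n)) := by
    -- basic facts about a, b
  have hpow : (0:ℝ) < 2 ^ b := by positivity
  have hd1 : (0:ℝ) < (a : ℝ) / 2 ^ b := by rw [← hab]; linarith
  have hd2 : (a : ℝ) / 2 ^ b < 1 := by rw [← hab]; linarith
  have haR : (0:ℝ) < a := by
    by_contra h
    push_neg at h
    have : (a:ℝ) / 2 ^ b ≤ 0 := div_nonpos_of_nonpos_of_nonneg h (le_of_lt hpow)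
    linarith
  have ha2R : (a : ℝ) < 2 ^ b := (div_lt_one hpow).mp hd2
  have ha1 : 1 ≤ a := by exact_mod_cast haR
  have ha2 : a < 2 ^ b := by exact_mod_cast ha2R
  set S := (Finset.range b).filter (fun i => a.testBit i) with hS
  have hsum : ∑ i ∈ S, 2 ^ i = a := by
    rw [hS, Finset.sum_filter]; exact bits_sum b a ha2
  -- divisibility
  have hdvd : ∀ n : ℕ, wedgeSubgroupOrder a b n ∣ 2 ^ (2 ^ b * n) - 1 := by
    intro n
    refine dvd_trans (Finset.prod_dvd_prod_of_subset _ _ _ (Finset.filter_subset _ _))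
      ⟨2 ^ n - 1, ?_⟩
    rw [← full_prod b n, mul_comm]
  -- lower bound on wedge
  have hlow : ∀ n : ℕ, 2 ^ (a * n) ≤ wedgeSubgroupOrder a b n := by
    intro n
    have : (2:ℕ) ^ (a * n) = ∏ i ∈ S, 2 ^ (2 ^ i * n) := by
      rw [Finset.prod_pow_eq_pow_sum, ← Finset.sum_mul, hsum]
    rw [this, wedgeSubgroupOrder, ← hS]
    exact Finset.prod_le_prod' fun i _ => Nat.le_succ _
  -- upper bound on wedge
  have hupp : ∀ n : ℕ, wedgeSubgroupOrder a b n ≤ 2 ^ b * 2 ^ (a * n) := by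
    intro n
    have h1 : wedgeSubgroupOrder a b n ≤ ∏ i ∈ S, 2 ^ (2 ^ i * n + 1) := by
      rw [wedgeSubgroupOrder, ← hS]
      refine Finset.prod_le_prod' fun i _ => ?_
      have : (2:ℕ) ^ (2 ^ i * n + 1) = 2 ^ (2 ^ i * n) + 2 ^ (2 ^ i * n) := by ring
      have h2 : 1 ≤ (2:ℕ) ^ (2 ^ i * n) := Nat.one_le_two_pow
      omega
    have h2 : ∏ i ∈ S, (2:ℕ) ^ (2 ^ i * n + 1) = 2 ^ (a * n + S.card) := by
      rw [Finset.prod_pow_eq_pow_sum, Finset.sum_add_distrib, ← Finset.sum_mul, hsum,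
        Finset.sum_const, smul_eq_mul, mul_one]
    have h3 : S.card ≤ b := le_trans (Finset.card_filter_le _ _) (by simp)
    calc wedgeSubgroupOrder a b n ≤ 2 ^ (a * n + S.card) := h1.trans h2.le
      _ ≤ 2 ^ (a * n + b) := Nat.pow_le_pow_right (by norm_num) (by omega)
      _ = 2 ^ b * 2 ^ (a * n) := by rw [← pow_add]; ring_nf
  have hpos : ∀ n : ℕ, 0 < wedgeSubgroupOrder a b n :=
    fun n => lt_of_lt_of_le (pow_pos (by norm_num) _) (hlow n)
  -- quotient bounds in ℕ
  have hquot : ∀ n : ℕ, 1 ≤ n →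
      2 ^ ((2 ^ b - a) * n) ≤ 2 ^ (b + 1) * ((2 ^ (2 ^ b * n) - 1) / wedgeSubgroupOrder a b n) ∧
      (2 ^ (2 ^ b * n) - 1) / wedgeSubgroupOrder a b n ≤ 2 ^ ((2 ^ b - a) * n) := by
    intro n hn
    set w := wedgeSubgroupOrder a b n with hw
    set k := (2 ^ (2 ^ b * n) - 1) / w with hkdef
    have hk : w * k = 2 ^ (2 ^ b * n) - 1 := Nat.mul_div_cancel' (hdvd n)
    have hexp : a * n + (2 ^ b - a) * n = 2 ^ b * n := by
      have := Nat.mul_le_mul_right n (le_of_lt ha2)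
      have h2 : (2 ^ b - a) * n = 2 ^ b * n - a * n := Nat.sub_mul _ _ _
      omega
    have hsplit : 2 ^ (a * n) * 2 ^ ((2 ^ b - a) * n) = 2 ^ (2 ^ b * n) := by
      rw [← pow_add, hexp]
    have hq2 : 2 ^ (2 ^ b * n) ≤ 2 * (2 ^ (2 ^ b * n) - 1) := by
      have hbn : 1 ≤ 2 ^ b * n := Nat.one_le_iff_ne_zero.mpr (by positivity)
      have : (2:ℕ) ^ 1 ≤ 2 ^ (2 ^ b * n) := Nat.pow_le_pow_right (by norm_num) hbn
      omega
    constructor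
    · apply Nat.le_of_mul_le_mul_left _ (hpos n)
      calc w * 2 ^ ((2 ^ b - a) * n)
          ≤ (2 ^ b * 2 ^ (a * n)) * 2 ^ ((2 ^ b - a) * n) :=
            Nat.mul_le_mul_right _ (hupp n)
        _ = 2 ^ b * 2 ^ (2 ^ b * n) := by rw [mul_assoc, hsplit]
        _ ≤ 2 ^ b * (2 * (2 ^ (2 ^ b * n) - 1)) := Nat.mul_le_mul_left _ hq2
        _ = 2 ^ (b + 1) * (w * k) := by rw [hk]; ring
        _ = w * (2 ^ (b + 1) * k) := by ring
    · apply Nat.le_of_mul_le_mul_left _ (hpos n)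
      calc w * k = 2 ^ (2 ^ b * n) - 1 := hk
        _ ≤ 2 ^ (a * n) * 2 ^ ((2 ^ b - a) * n) := by rw [hsplit]; omega
        _ ≤ w * 2 ^ ((2 ^ b - a) * n) := Nat.mul_le_mul_right _ (hlow n)
  refine ⟨fun n _ => hdvd n, ⟨1, 2 ^ b, one_pos, hpow, fun n hn => ?_⟩,
    ⟨(2 ^ (b + 1) : ℝ)⁻¹, 1, by positivity, one_pos, fun n hn => ?_⟩⟩
  · constructor
    · rw [one_mul]; exact_mod_cast hlow n
    · exact_mod_cast hupp n
  · obtain ⟨h1, h2⟩ := hquot n hn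
    constructor
    · rw [inv_mul_le_iff₀ (by positivity)]
      calc ((2:ℝ) ^ ((2 ^ b - a) * n))
          = ((2 ^ ((2 ^ b - a) * n) : ℕ) : ℝ) := by push_cast; ring
        _ ≤ ((2 ^ (b + 1) * ((2 ^ (2 ^ b * n) - 1) / wedgeSubgroupOrder a b n) : ℕ) : ℝ) := by
            exact_mod_cast h1
        _ = 2 ^ (b + 1) * (((2 ^ (2 ^ b * n) - 1) / wedgeSubgroupOrder a b n : ℕ) : ℝ) := by
            push_cast; ring
    · rw [one_mul]; exact_mod_cast h2
end

section
/- Let q be a power of 2, let H ≤ F_q^× be a subgroup of odd order, let g ∈ F_q^×, and let P ∈ F_q[X, Y]. Then for every point p = (x, y) ∈ F_q², the wedge restriction Σ_{α∈gH} Σ_{T∈F_q} P(T, α(T−x)+y) equals P(x, y) plus the sum of P over all points of the wedge other than p, where the wedge is the union of the lines {(T, α(T−x)+y) : T ∈ F_q} for α ∈ gH. In particular, if the wedge restriction is 0, then P(x, y) equals the sum of P over the wedge points excluding p. -/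
open scoped Pointwise

/-- The wedge through `(x, y)` formed by a slope set `S ⊆ F`. -/
def wedgeSet (F : Type*) [Field F] (S : Set F) (x y : F) : Set (F × F) :=
  {z | ∃ α ∈ S, ∃ T : F, z = (T, α * (T - x) + y)}

/-- For a coset `gH` of odd order in characteristic 2, the wedge restriction of a
polynomial `P` at `p = (x, y)` equals `P(x, y)` plus the sum of `P` over the wedge
points other than `p`; in particular if the wedge restriction vanishes, `P(x, y)`
equals the sum over the other wedge points. -/
theorem wedge_restriction_eq_point_add_sum (F : Type*) [Field F] [Fintype F] [CharP F 2]
    (H : Subgroup Fˣ) (hodd : Odd (Nat.card H)) (g : Fˣ)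
    (P : MvPolynomial (Fin 2) F) (x y : F) :
    ((∑ᶠ α ∈ ((g : Fˣ) • (H : Set Fˣ)), ∑ T : F,
        MvPolynomial.eval ![T, (α : F) * (T - x) + y] P) =
      MvPolynomial.eval ![x, y] P +
        ∑ᶠ z ∈ (wedgeSet F (Units.val '' ((g : Fˣ) • (H : Set Fˣ))) x y \ {(x, y)}),
          MvPolynomial.eval ![z.1, z.2] P) ∧
    ((∑ᶠ α ∈ ((g : Fˣ) • (H : Set Fˣ)), ∑ T : F,
        MvPolynomial.eval ![T, (α : F) * (T - x) + y] P) = 0 →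
      MvPolynomial.eval ![x, y] P =
        ∑ᶠ z ∈ (wedgeSet F (Units.val '' ((g : Fˣ) • (H : Set Fˣ))) x y \ {(x, y)}),
          MvPolynomial.eval ![z.1, z.2] P) := by
  classical
  have hSfin : ((g : Fˣ) • (H : Set Fˣ)).Finite := Set.toFinite _
  have hWfin : (wedgeSet F (Units.val '' ((g : Fˣ) • (H : Set Fˣ))) x y \ {(x, y)}).Finite :=
    Set.toFinite _
  set A := hSfin.toFinset with hA
  set B := hWfin.toFinset with hB
  have hmain : (∑ᶠ α ∈ ((g : Fˣ) • (H : Set Fˣ)), ∑ T : F,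
        MvPolynomial.eval ![T, (α : F) * (T - x) + y] P) =
      MvPolynomial.eval ![x, y] P +
        ∑ᶠ z ∈ (wedgeSet F (Units.val '' ((g : Fˣ) • (H : Set Fˣ))) x y \ {(x, y)}),
          MvPolynomial.eval ![z.1, z.2] P := by
    rw [finsum_mem_eq_finite_toFinset_sum _ hSfin, finsum_mem_eq_finite_toFinset_sum _ hWfin]
    -- split off T = x
    have hsplit : ∀ α : Fˣ, (∑ T : F, MvPolynomial.eval ![T, (α : F) * (T - x) + y] P)
        = MvPolynomial.eval ![x, y] P
          + ∑ T ∈ Finset.univ.erase x, MvPolynomial.eval ![T, (α : F) * (T - x) + y] P := by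
      intro α
      rw [← Finset.add_sum_erase _ _ (Finset.mem_univ x)]
      simp
    simp_rw [hsplit]
    rw [Finset.sum_add_distrib, Finset.sum_const]
    have hcard : A.card = Nat.card H := by
      rw [← Set.ncard_eq_toFinset_card _ hSfin, Set.ncard_smul_set,
        ← Nat.card_coe_set_eq]
      rfl
    have hone : A.card • MvPolynomial.eval ![x, y] P = MvPolynomial.eval ![x, y] P := by
      rw [hcard]
      obtain ⟨k, hk⟩ := hodd
      rw [hk, add_nsmul, one_nsmul, mul_comm, mul_nsmul, CharTwo.two_nsmul, zero_add]
    rw [hone]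
    congr 1
    -- bijection
    rw [← Finset.sum_product']
    apply Finset.sum_nbij (fun p => (p.2, (p.1 : F) * (p.2 - x) + y))
    · rintro ⟨α, T⟩ hp
      simp only [Finset.mem_product, Set.Finite.mem_toFinset, Finset.mem_erase,
        Finset.mem_univ, and_true] at hp ⊢
      refine Set.mem_diff_singleton.mpr ⟨⟨(α : F), ⟨α, hp.1, rfl⟩, T, rfl⟩, ?_⟩
      intro h
      exact hp.2 (congrArg Prod.fst h)
    · rintro ⟨α₁, T₁⟩ h₁ ⟨α₂, T₂⟩ h₂ heq
      simp only [Finset.mem_coe, Finset.mem_product, Set.Finite.mem_toFinset,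
        Finset.mem_erase, Finset.mem_univ, and_true] at h₁ h₂
      simp only [Prod.mk.injEq] at heq
      obtain ⟨rfl, hv⟩ := heq
      have hne : T₁ - x ≠ 0 := sub_ne_zero.mpr h₁.2
      have hval : (α₁ : F) = (α₂ : F) :=
        mul_right_cancel₀ hne (add_right_cancel hv)
      simp [Prod.ext_iff, Units.ext_iff, hval]
    · intro z hz
      simp only [Finset.mem_coe, Set.Finite.mem_toFinset, Set.mem_diff,
        Set.mem_singleton_iff] at hz
      obtain ⟨⟨a, ⟨u, hu, rfl⟩, T, rfl⟩, hne⟩ := hz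
      have hTx : T ≠ x := by
        rintro rfl
        simp at hne
      refine ⟨(u, T), ?_, rfl⟩
      simp only [Finset.mem_coe, Finset.mem_product, Set.Finite.mem_toFinset,
        Finset.mem_erase, Finset.mem_univ, and_true]
      exact ⟨hu, hTx⟩
    · rintro ⟨α, T⟩ _
      rfl
  refine ⟨hmain, fun h0 => ?_⟩
  rw [h0] at hmain
  have h1 := eq_neg_of_add_eq_zero_left hmain.symm
  rwa [CharTwo.neg_eq] at h1
end

section
/- Let q = 2^{ℓ'd} and m = (2^{ℓ'd} − 1)/(2^{ℓ'} − 1). The number of pairs (a, b) with 0 ≤ a, b ≤ q − 1 such that a ∨ b = q − 1 and there exists i with i ≡ b (mod m) and i ≤₂ a ∧ b is exactly (2^{d+1} − 1)^{ℓ'}; moreover (2^{d+1} − 1)^{ℓ'} ≤ 2^{ℓ'} · 2^{ℓ'd}. -/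
namespace BadCount

def F (g : ℕ → Bool) (n : ℕ) : ℕ := ∑ j ∈ Finset.range n, cond (g j) (2^j) 0

lemma F_lt (g : ℕ → Bool) (n : ℕ) : F g n < 2^n := by
  induction n with
  | zero => simp [F]
  | succ n ih =>
    have : cond (g n) (2^n) 0 ≤ 2^n := by cases g n <;> simp
    have h2 : F g (n+1) = F g n + cond (g n) (2^n) 0 := Finset.sum_range_succ _ n
    rw [h2, pow_succ]
    omega

lemma F_testBit (g : ℕ → Bool) (n j : ℕ) :
    (F g n).testBit j = (decide (j < n) && g j) := by
  induction n with
  | zero => simp [F]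
  | succ n ih =>
    have h2 : F g (n+1) = 2^n * (cond (g n) 1 0) + F g n := by
      rw [F, Finset.sum_range_succ, add_comm]
      cases g n <;> simp [F]
    rw [h2, Nat.testBit_two_pow_mul_add _ (F_lt g n) j]
    by_cases hj : j < n
    · rw [if_pos hj, ih]
      have h1 : j < n + 1 := by omega
      simp [hj, h1]
    · rw [if_neg hj]
      by_cases hj2 : j = n
      · subst hj2
        cases hgn : g j <;> simp [hgn, Nat.sub_self, Nat.lt_succ_self]
      · have h1 : ¬ j < n + 1 := by omega
        have h2 : 0 < j - n := by omega
        cases hgn : g n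
        · simp [h1, hgn]
        · simp [h1, hgn]
          exact Nat.testBit_lt_two_pow (by calc (1:ℕ) < 2^1 := by norm_num
                                              _ ≤ 2^(j-n) := Nat.pow_le_pow_right (by norm_num) h2)

lemma F_self {c ℓ : ℕ} (hc : c < 2^ℓ) : F c.testBit ℓ = c := by
  apply Nat.eq_of_testBit_eq
  intro j
  rw [F_testBit]
  by_cases hj : j < ℓ
  · simp [hj]
  · have hcj : c < 2^j := lt_of_lt_of_le hc (Nat.pow_le_pow_right (by norm_num) (by omega))
    simp [hj, Nat.testBit_lt_two_pow hcj]

lemma addOr (x : ℕ) : ∀ y, x &&& y = 0 → x + y = x ||| y := by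
  induction x using Nat.strong_induction_on with
  | _ x ih =>
    intro y h
    rcases Nat.eq_zero_or_pos x with hx | hx
    · simp [hx]
    · have h2 : x / 2 &&& y / 2 = 0 := by rw [← Nat.and_div_two, h]
      have ih2 := ih (x/2) (Nat.div_lt_self hx (by norm_num)) (y/2) h2
      have hb0 : (x &&& y).testBit 0 = false := by rw [h]; exact Nat.zero_testBit 0
      rw [Nat.testBit_and] at hb0
      simp only [Nat.testBit_zero] at hb0
      have hxy2 : (x ||| y) / 2 = x / 2 ||| y / 2 := Nat.or_div_two
      have hxym : (x ||| y) % 2 = 1 ↔ x % 2 = 1 ∨ y % 2 = 1 := Nat.or_mod_two_eq_one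
      have e1 := Nat.div_add_mod x 2
      have e2 := Nat.div_add_mod y 2
      have e3 := Nat.div_add_mod (x ||| y) 2
      have m1 : x % 2 < 2 := Nat.mod_lt _ (by norm_num)
      have m2 : y % 2 < 2 := Nat.mod_lt _ (by norm_num)
      have m3 : (x ||| y) % 2 < 2 := Nat.mod_lt _ (by norm_num)
      have hor2 : (x ||| y) % 2 = x % 2 + y % 2 := by
        by_cases q1 : x % 2 = 1 <;> by_cases q2 : y % 2 = 1
        · exfalso; simp [q1, q2] at hb0
        · have := hxym.mpr (Or.inl q1); omega
        · have := hxym.mpr (Or.inr q2); omega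
        · have hne : ¬((x ||| y) % 2 = 1) := fun hh => by
            rcases hxym.mp hh with h' | h' <;> contradiction
          omega
      omega

lemma sub_eq_xor {i b : ℕ} (h : i &&& b = i) : b - i = b ^^^ i := by
  have hdisj : i &&& (b ^^^ i) = 0 := by
    rw [Nat.and_xor_distrib_left, h, Nat.and_self, Nat.xor_self]
  have hle : i ≤ b := h ▸ Nat.and_le_right
  have hor : i ||| (b ^^^ i) = b := by
    apply Nat.eq_of_testBit_eq
    intro j
    have hj := congrArg (fun t => t.testBit j) h
    simp only [Nat.testBit_and] at hj
    simp only [Nat.testBit_or, Nat.testBit_xor]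
    cases hi : i.testBit j <;> cases hbj : b.testBit j <;> simp_all
  have := addOr i (b ^^^ i) hdisj
  omega

lemma geom (ℓ d : ℕ) : (2^ℓ - 1) * ∑ k ∈ Finset.range d, 2^(k*ℓ) = 2^(ℓ*d) - 1 := by
  induction d with
  | zero => simp
  | succ d ih =>
    rw [Finset.sum_range_succ, Nat.mul_add, ih]
    have h1 : (2^ℓ - 1) * 2^(d*ℓ) = 2^(ℓ*(d+1)) - 2^(ℓ*d) := by
      rw [Nat.sub_mul, one_mul, ← pow_add]
      congr 2 <;> ring
    rw [h1]
    have h2 : (1:ℕ) ≤ 2^(ℓ*d) := Nat.one_le_two_pow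
    have h3 : (2:ℕ)^(ℓ*d) ≤ 2^(ℓ*(d+1)) := Nat.pow_le_pow_right (by norm_num) (by nlinarith)
    omega

lemma pos_lt {k r ℓ d : ℕ} (hk : k < d) (hr : r < ℓ) : k*ℓ + r < ℓ*d := by
  calc k*ℓ + r < k*ℓ + ℓ := by omega
    _ = (k+1)*ℓ := by ring
    _ ≤ d*ℓ := Nat.mul_le_mul_right _ hk
    _ = ℓ*d := Nat.mul_comm _ _

lemma mulm_eq {c : ℕ} (ℓ d : ℕ) (hc : c < 2^ℓ) :
    c * ∑ k ∈ Finset.range d, 2^(k*ℓ) = F (fun j => c.testBit (j % ℓ)) (ℓ*d) := by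
  induction d with
  | zero => simp [F]
  | succ d ih =>
    rw [Finset.sum_range_succ, Nat.mul_add, ih]
    have hsplit : F (fun j => c.testBit (j % ℓ)) (ℓ*(d+1)) =
        F (fun j => c.testBit (j % ℓ)) (ℓ*d) +
          ∑ r ∈ Finset.range ℓ, cond (c.testBit ((ℓ*d + r) % ℓ)) (2^(ℓ*d + r)) 0 := by
      rw [F, show ℓ*(d+1) = ℓ*d + ℓ by ring, Finset.sum_range_add]; rfl
    rw [hsplit]
    congr 1
    have hmod : ∀ r ∈ Finset.range ℓ, cond (c.testBit ((ℓ*d + r) % ℓ)) (2^(ℓ*d + r)) 0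
        = 2^(ℓ*d) * cond (c.testBit r) (2^r) 0 := by
      intro r hr
      have : (ℓ*d + r) % ℓ = r := by
        rw [Nat.mul_add_mod]
        exact Nat.mod_eq_of_lt (Finset.mem_range.mp hr)
      rw [this, pow_add]
      cases c.testBit r <;> simp
    rw [Finset.sum_congr rfl hmod, ← Finset.mul_sum, ← F, F_self hc]
    ring

lemma mulm_testBit {c : ℕ} (ℓ d : ℕ) (hc : c < 2^ℓ) (j : ℕ) :
    (c * ∑ k ∈ Finset.range d, 2^(k*ℓ)).testBit j
      = (decide (j < ℓ*d) && c.testBit (j % ℓ)) := by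
  rw [mulm_eq ℓ d hc, F_testBit]

lemma mulm_lt {c : ℕ} (ℓ d : ℕ) (hc : c < 2^ℓ) :
    c * ∑ k ∈ Finset.range d, 2^(k*ℓ) < 2^(ℓ*d) := by
  rw [mulm_eq ℓ d hc]; exact F_lt _ _

lemma keyChar (ℓ d : ℕ) (hℓ : 0 < ℓ) (hd : 0 < d) (a b : ℕ)
    (ha : a < 2^(ℓ*d)) (hb : b < 2^(ℓ*d))
    (hor : a ||| b = 2^(ℓ*d) - 1) :
    (∃ i : ℕ, i % (∑ k ∈ Finset.range d, 2^(k*ℓ)) = b % (∑ k ∈ Finset.range d, 2^(k*ℓ)) ∧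
        ∀ j, i.testBit j = true → (a &&& b).testBit j = true) ↔
    (∀ r < ℓ, (∀ k < d, a.testBit (k*ℓ+r) = true) ∨ (∀ k < d, b.testBit (k*ℓ+r) = true)) := by
  set m := ∑ k ∈ Finset.range d, 2^(k*ℓ) with hm
  have hm1 : 1 ≤ m := by
    calc 1 = 2^(0*ℓ) := by norm_num
    _ ≤ m := Finset.single_le_sum (f := fun k => 2^(k*ℓ)) (fun _ _ => Nat.zero_le _)
        (Finset.mem_range.mpr hd)
  have hgeom : (2 ^ ℓ - 1) * m = 2^(ℓ*d) - 1 := geom ℓ d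
  have h2pow1 : (1:ℕ) ≤ 2^ℓ := Nat.one_le_two_pow
  have h2powd1 : (1:ℕ) ≤ 2^(ℓ*d) := Nat.one_le_two_pow
  have horj : ∀ j, j < ℓ*d → a.testBit j = true ∨ b.testBit j = true := by
    intro j hj
    have h := congrArg (fun t => Nat.testBit t j) hor
    simp only [Nat.testBit_or, Nat.testBit_two_pow_sub_one] at h
    rw [decide_eq_true hj] at h
    rcases Bool.or_eq_true_iff.mp h with h' | h'
    · exact Or.inl h'
    · exact Or.inr h'
  have hmodr : ∀ k r, r < ℓ → (k*ℓ + r) % ℓ = r := by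
    intro k r hr
    rw [Nat.mul_comm, Nat.mul_add_mod, Nat.mod_eq_of_lt hr]
  have hdivlt : ∀ j, j < ℓ*d → j / ℓ < d := by
    intro j hj
    rw [Nat.div_lt_iff_lt_mul hℓ]
    calc j < ℓ*d := hj
      _ = d*ℓ := Nat.mul_comm _ _
  have hdm : ∀ j, j / ℓ * ℓ + j % ℓ = j := by
    intro j
    rw [Nat.mul_comm]
    exact Nat.div_add_mod j ℓ
  constructor
  · rintro ⟨i, him, hisub⟩
    have hib : i &&& b = i := by
      apply Nat.eq_of_testBit_eq
      intro j
      rw [Nat.testBit_and]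
      cases hi : i.testBit j
      · simp
      · have := hisub j hi
        rw [Nat.testBit_and] at this
        simp only [Bool.and_eq_true] at this
        simp [this.2]
    have hile : i ≤ b := hib ▸ Nat.and_le_right
    have him' : Nat.ModEq m i b := him
    obtain ⟨c, hc⟩ := (Nat.modEq_iff_dvd' hile).mp him'
    have hclt : c < 2^ℓ := by
      by_contra hcge
      push_neg at hcge
      have h1 : 2^ℓ * m ≤ m * c := by
        calc 2^ℓ * m = m * 2^ℓ := Nat.mul_comm _ _
          _ ≤ m * c := Nat.mul_le_mul_left _ hcge
      have h2 : m * c ≤ b := by omega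
      have h3 : (2^ℓ - 1) * m = 2^ℓ * m - m := by rw [Nat.sub_mul, one_mul]
      have h4 : m ≤ 2^ℓ * m := Nat.le_mul_of_pos_left _ (by omega)
      omega
    have hcmbit : ∀ j, (c*m).testBit j = (decide (j < ℓ*d) && c.testBit (j % ℓ)) :=
      mulm_testBit ℓ d hclt
    have hcmxor : c * m = b ^^^ i := by
      rw [← sub_eq_xor hib, hc, Nat.mul_comm]
    have hbbit : ∀ j, b.testBit j = ((i.testBit j).xor ((c*m).testBit j)) := by
      intro j
      rw [hcmxor, Nat.testBit_xor]
      cases hI : i.testBit j <;> cases hB : b.testBit j <;> simp [hI, hB]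
    have hibbit : ∀ j, (i.testBit j && b.testBit j) = i.testBit j := by
      intro j
      have := congrArg (fun t => t.testBit j) hib
      simpa [Nat.testBit_and] using this
    intro r hr
    by_cases hcr : c.testBit r = true
    · right
      intro k hk
      set j := k*ℓ + r with hj
      have hjlt : j < ℓ*d := pos_lt hk hr
      have hcmj : (c*m).testBit j = true := by
        rw [hcmbit, hmodr k r hr]
        simp [hjlt, hcr]
      have hbb := hbbit j
      rw [hcmj] at hbb
      have hii := hibbit j
      cases hi : i.testBit j
      · rw [hi] at hbb; simpa using hbb
      · exfalso
        simp only [hi, Bool.true_and] at hii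
        rw [hi] at hbb
        rw [hii] at hbb
        simp at hbb
    · left
      intro k hk
      set j := k*ℓ + r with hj
      have hjlt : j < ℓ*d := pos_lt hk hr
      by_contra hab
      have haf : a.testBit j = false := by
        cases h : a.testBit j
        · rfl
        · exact absurd h hab
      have hbt : b.testBit j = true := (horj j hjlt).resolve_left (by simp [haf])
      have hcmj : (c*m).testBit j = false := by
        rw [hcmbit, hmodr k r hr]
        simp [hcr]
      have hbb := hbbit j
      rw [hcmj, hbt] at hbb
      have hit : i.testBit j = true := by
        cases h : i.testBit j
        · rw [h] at hbb; simp at hbb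
        · rfl
      have := hisub j hit
      rw [Nat.testBit_and, haf] at this
      simp at this
  · intro hcol
    set c := F (fun r => !(decide (∀ k, k < d → a.testBit (k*ℓ+r) = true))) ℓ with hcdef
    have hclt : c < 2^ℓ := F_lt _ _
    have hcbit' : ∀ r, r < ℓ →
        (c.testBit r = false ↔ ∀ k, k < d → a.testBit (k*ℓ+r) = true) := by
      intro r hr
      rw [hcdef, F_testBit]
      simp [hr]
    have hcmbit : ∀ j, (c*m).testBit j = (decide (j < ℓ*d) && c.testBit (j % ℓ)) :=
      mulm_testBit ℓ d hclt
    have hcmb : (c*m) &&& b = c*m := by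
      apply Nat.eq_of_testBit_eq
      intro j
      rw [Nat.testBit_and]
      cases hcmj : (c*m).testBit j
      · simp
      · rw [hcmbit] at hcmj
        simp only [Bool.and_eq_true, decide_eq_true_eq] at hcmj
        obtain ⟨hjlt, hcj⟩ := hcmj
        have hrlt : j % ℓ < ℓ := Nat.mod_lt _ hℓ
        have hnota : ¬ ∀ k, k < d → a.testBit (k*ℓ + j % ℓ) = true := by
          intro hall
          rw [(hcbit' _ hrlt).mpr hall] at hcj
          exact Bool.false_ne_true hcj
        have hbcol := (hcol (j % ℓ) hrlt).resolve_left hnota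
        have hbj := hbcol (j / ℓ) (hdivlt j hjlt)
        rw [hdm j] at hbj
        simp [hbj]
    have hcmle : c*m ≤ b := hcmb ▸ Nat.and_le_right
    refine ⟨b - c*m, ?_, ?_⟩
    · conv_rhs => rw [show b = (b - c*m) + c*m by omega]
      rw [Nat.add_mul_mod_self_right]
    · intro j hij
      rw [sub_eq_xor hcmb, Nat.testBit_xor] at hij
      have hper := congrArg (fun t => t.testBit j) hcmb
      simp only [Nat.testBit_and] at hper
      have hbj : b.testBit j = true ∧ (c*m).testBit j = false := by
        cases h1 : b.testBit j <;> cases h2 : (c*m).testBit j <;>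
          rw [h1, h2] at hij hper <;> simp_all
      have hjlt : j < ℓ*d := by
        have h2j : 2^j ≤ b := Nat.ge_two_pow_of_testBit hbj.1
        have hlt : (2:ℕ)^j < 2^(ℓ*d) := lt_of_le_of_lt h2j hb
        exact (Nat.pow_lt_pow_iff_right (by norm_num)).mp hlt
      have hrlt : j % ℓ < ℓ := Nat.mod_lt _ hℓ
      have hcj : c.testBit (j % ℓ) = false := by
        have h5 := hbj.2
        rw [hcmbit] at h5
        simpa [hjlt] using h5
      have hcj' := (hcbit' _ hrlt).mp hcj
      have haj : a.testBit j = true := by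
        have := hcj' (j / ℓ) (hdivlt j hjlt)
        rwa [hdm j] at this
      rw [Nat.testBit_and, haj, hbj.1]
      rfl

def Sset (d : ℕ) : Finset ((Fin d → Bool) × (Fin d → Bool)) :=
  Finset.univ.filter (fun p => (∀ k, p.1 k = true) ∨ (∀ k, p.2 k = true))

lemma Sset_card (d : ℕ) : (Sset d).card = 2^(d+1) - 1 := by
  classical
  have h1 : Sset d = (Finset.univ.filter (fun p : (Fin d → Bool) × (Fin d → Bool) =>
      p.1 = fun _ => true)) ∪ (Finset.univ.filter (fun p => p.2 = fun _ => true)) := by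
    rw [← Finset.filter_or]
    apply Finset.filter_congr
    intro p _
    simp [funext_iff]
  have h2 : (Finset.univ.filter (fun p : (Fin d → Bool) × (Fin d → Bool) =>
      p.1 = fun _ => true)) ∩ (Finset.univ.filter (fun p => p.2 = fun _ => true))
      = {((fun _ => true), (fun _ => true))} := by
    ext p
    obtain ⟨x, y⟩ := p
    simp [Prod.ext_iff]
  have h3 : (Finset.univ.filter (fun p : (Fin d → Bool) × (Fin d → Bool) =>
      p.1 = fun _ => true)) = {(fun _ => true : Fin d → Bool)} ×ˢ Finset.univ := by
    ext p
    obtain ⟨x, y⟩ := p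
    simp [eq_comm]
  have h4 : (Finset.univ.filter (fun p : (Fin d → Bool) × (Fin d → Bool) =>
      p.2 = fun _ => true)) = Finset.univ ×ˢ {(fun _ => true : Fin d → Bool)} := by
    ext p
    obtain ⟨x, y⟩ := p
    simp [eq_comm]
  have hcard := Finset.card_union_add_card_inter
    (Finset.univ.filter (fun p : (Fin d → Bool) × (Fin d → Bool) => p.1 = fun _ => true))
    (Finset.univ.filter (fun p => p.2 = fun _ => true))
  rw [h2, h3, h4] at hcard
  simp only [Finset.card_product, Finset.card_singleton, Finset.card_univ,
    Finset.card_singleton, one_mul, mul_one, Fintype.card_fun, Fintype.card_bool,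
    Fintype.card_fin] at hcard
  rw [h1, h3, h4]
  have hpow : (2:ℕ)^(d+1) = 2^d + 2^d := by rw [pow_succ]; ring
  omega

open scoped Classical in
lemma main_count (ℓ d : ℕ) (hℓ : 0 < ℓ) (hd : 0 < d) :
    ((Finset.range (2 ^ (ℓ * d)) ×ˢ Finset.range (2 ^ (ℓ * d))).filter (fun p =>
        p.1 ||| p.2 = 2 ^ (ℓ * d) - 1 ∧
        ∃ i : ℕ, i % (∑ k ∈ Finset.range d, 2 ^ (k * ℓ)) =
            p.2 % (∑ k ∈ Finset.range d, 2 ^ (k * ℓ)) ∧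
          ∀ j, i.testBit j = true → (p.1 &&& p.2).testBit j = true)).card
      = (2 ^ (d + 1) - 1) ^ ℓ := by
  have hmodr : ∀ k r : ℕ, r < ℓ → (k*ℓ + r) % ℓ = r := by
    intro k r hr
    rw [Nat.mul_comm, Nat.mul_add_mod, Nat.mod_eq_of_lt hr]
  have hdivr : ∀ k r : ℕ, r < ℓ → (k*ℓ + r) / ℓ = k := by
    intro k r hr
    rw [Nat.mul_comm, Nat.mul_add_div hℓ, Nat.div_eq_of_lt hr, add_zero]
  have hdivlt : ∀ j, j < ℓ*d → j / ℓ < d := by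
    intro j hj
    rw [Nat.div_lt_iff_lt_mul hℓ]
    calc j < ℓ*d := hj
      _ = d*ℓ := Nat.mul_comm _ _
  have hdm : ∀ j, j / ℓ * ℓ + j % ℓ = j := by
    intro j
    rw [Nat.mul_comm]
    exact Nat.div_add_mod j ℓ
  have hfin1 : ∀ (k : Fin d) (r : Fin ℓ) (h1 : (k.1*ℓ+r.1) % ℓ < ℓ),
      (⟨(k.1*ℓ+r.1) % ℓ, h1⟩ : Fin ℓ) = r := fun k r h1 => Fin.ext (hmodr k.1 r.1 r.2)
  have hfin2 : ∀ (k : Fin d) (r : Fin ℓ) (h2 : (k.1*ℓ+r.1) / ℓ < d),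
      (⟨(k.1*ℓ+r.1) / ℓ, h2⟩ : Fin d) = k := fun k r h2 => Fin.ext (hdivr k.1 r.1 r.2)
  set t := Fintype.piFinset (fun _ : Fin ℓ => Sset d) with ht
  have hbij : ((Finset.range (2 ^ (ℓ * d)) ×ˢ Finset.range (2 ^ (ℓ * d))).filter (fun p =>
        p.1 ||| p.2 = 2 ^ (ℓ * d) - 1 ∧
        ∃ i : ℕ, i % (∑ k ∈ Finset.range d, 2 ^ (k * ℓ)) =
            p.2 % (∑ k ∈ Finset.range d, 2 ^ (k * ℓ)) ∧
          ∀ j, i.testBit j = true → (p.1 &&& p.2).testBit j = true)).card = t.card := by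
    apply Finset.card_nbij'
      (i := fun p r => ((fun k : Fin d => p.1.testBit (k.1*ℓ + r.1)),
                        (fun k : Fin d => p.2.testBit (k.1*ℓ + r.1))))
      (j := fun f => (F (fun j => if h : j < ℓ*d then
              (f ⟨j % ℓ, Nat.mod_lt _ hℓ⟩).1 ⟨j / ℓ, hdivlt j h⟩ else false) (ℓ*d),
            F (fun j => if h : j < ℓ*d then
              (f ⟨j % ℓ, Nat.mod_lt _ hℓ⟩).2 ⟨j / ℓ, hdivlt j h⟩ else false) (ℓ*d)))
    · -- maps to
      intro p hp
      simp only [Finset.mem_coe, Finset.mem_filter, Finset.mem_product, Finset.mem_range] at hp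
      obtain ⟨⟨ha, hb⟩, hor, hex⟩ := hp
      rw [Finset.mem_coe, Fintype.mem_piFinset]
      intro r
      rw [Sset, Finset.mem_filter]
      refine ⟨Finset.mem_univ _, ?_⟩
      have hcol := (keyChar ℓ d hℓ hd p.1 p.2 ha hb hor).mp hex r r.2
      rcases hcol with h | h
      · exact Or.inl (fun k => h k.1 k.2)
      · exact Or.inr (fun k => h k.1 k.2)
    · -- maps back
      intro f hf
      rw [Finset.mem_coe, Fintype.mem_piFinset] at hf
      have hf' : ∀ r : Fin ℓ, (∀ k, (f r).1 k = true) ∨ (∀ k, (f r).2 k = true) := by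
        intro r
        have := hf r
        rw [Sset, Finset.mem_filter] at this
        exact this.2
      set A := F (fun j => if h : j < ℓ*d then
          (f ⟨j % ℓ, Nat.mod_lt _ hℓ⟩).1 ⟨j / ℓ, hdivlt j h⟩ else false) (ℓ*d) with hA
      set B := F (fun j => if h : j < ℓ*d then
          (f ⟨j % ℓ, Nat.mod_lt _ hℓ⟩).2 ⟨j / ℓ, hdivlt j h⟩ else false) (ℓ*d) with hB
      have hAlt : A < 2^(ℓ*d) := F_lt _ _
      have hBlt : B < 2^(ℓ*d) := F_lt _ _
      have hAbit : ∀ (k : Fin d) (r : Fin ℓ), A.testBit (k.1*ℓ + r.1) = (f r).1 k := by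
        intro k r
        rw [hA, F_testBit, decide_eq_true (pos_lt k.2 r.2), Bool.true_and,
          dif_pos (pos_lt k.2 r.2), hfin1, hfin2]
      have hBbit : ∀ (k : Fin d) (r : Fin ℓ), B.testBit (k.1*ℓ + r.1) = (f r).2 k := by
        intro k r
        rw [hB, F_testBit, decide_eq_true (pos_lt k.2 r.2), Bool.true_and,
          dif_pos (pos_lt k.2 r.2), hfin1, hfin2]
      have hor : A ||| B = 2^(ℓ*d) - 1 := by
        apply Nat.eq_of_testBit_eq
        intro j
        rw [Nat.testBit_or, Nat.testBit_two_pow_sub_one]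
        by_cases hj : j < ℓ*d
        · have hrlt : j % ℓ < ℓ := Nat.mod_lt _ hℓ
          have hklt : j / ℓ < d := hdivlt j hj
          have hA1 := hAbit ⟨j / ℓ, hklt⟩ ⟨j % ℓ, hrlt⟩
          have hB1 := hBbit ⟨j / ℓ, hklt⟩ ⟨j % ℓ, hrlt⟩
          simp only [hdm j] at hA1 hB1
          rw [hA1, hB1, decide_eq_true hj]
          rcases hf' ⟨j % ℓ, hrlt⟩ with h | h
          · rw [h ⟨j / ℓ, hklt⟩]; rfl
          · rw [h ⟨j / ℓ, hklt⟩, Bool.or_true]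
        · have h1 : A < 2^j := lt_of_lt_of_le hAlt (Nat.pow_le_pow_right (by norm_num) (by omega))
          have h2 : B < 2^j := lt_of_lt_of_le hBlt (Nat.pow_le_pow_right (by norm_num) (by omega))
          rw [Nat.testBit_lt_two_pow h1, Nat.testBit_lt_two_pow h2]
          simp [hj]
      simp only [Finset.mem_coe, Finset.mem_filter, Finset.mem_product, Finset.mem_range]
      refine ⟨⟨hAlt, hBlt⟩, hor, ?_⟩
      apply (keyChar ℓ d hℓ hd A B hAlt hBlt hor).mpr
      intro r hr
      rcases hf' ⟨r, hr⟩ with h | h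
      · left
        intro k hk
        have hA1 := hAbit ⟨k, hk⟩ ⟨r, hr⟩
        rw [hA1]
        exact h ⟨k, hk⟩
      · right
        intro k hk
        have hB1 := hBbit ⟨k, hk⟩ ⟨r, hr⟩
        rw [hB1]
        exact h ⟨k, hk⟩
    · -- left inverse
      intro p hp
      simp only [Finset.mem_coe, Finset.mem_filter, Finset.mem_product, Finset.mem_range] at hp
      obtain ⟨⟨ha, hb⟩, -⟩ := hp
      obtain ⟨a, b⟩ := p
      simp only at ha hb ⊢
      rw [Prod.mk.injEq]
      constructor
      · apply Nat.eq_of_testBit_eq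
        intro j
        rw [F_testBit]
        by_cases hj : j < ℓ*d
        · rw [decide_eq_true hj, Bool.true_and, dif_pos hj]
          simp only [hdm j]
        · have h1 : a < 2^j := lt_of_lt_of_le ha (Nat.pow_le_pow_right (by norm_num) (by omega))
          rw [Nat.testBit_lt_two_pow h1]
          simp [hj]
      · apply Nat.eq_of_testBit_eq
        intro j
        rw [F_testBit]
        by_cases hj : j < ℓ*d
        · rw [decide_eq_true hj, Bool.true_and, dif_pos hj]
          simp only [hdm j]
        · have h1 : b < 2^j := lt_of_lt_of_le hb (Nat.pow_le_pow_right (by norm_num) (by omega))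
          rw [Nat.testBit_lt_two_pow h1]
          simp [hj]
    · -- right inverse
      intro f hf
      funext r
      rw [Prod.ext_iff]
      constructor
      · funext k
        simp only
        rw [F_testBit, decide_eq_true (pos_lt k.2 r.2), Bool.true_and,
          dif_pos (pos_lt k.2 r.2), hfin1, hfin2]
      · funext k
        simp only
        rw [F_testBit, decide_eq_true (pos_lt k.2 r.2), Bool.true_and,
          dif_pos (pos_lt k.2 r.2), hfin1, hfin2]
  rw [hbij, ht, Fintype.card_piFinset]
  simp [Sset_card, Finset.prod_const, Finset.card_univ]

end BadCount

open scoped Classical in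
/-- With `q = 2^{ℓ'd}` and `m = 1 + 2^{ℓ'} + ⋯ + 2^{(d-1)ℓ'}`, the number of pairs
`(a, b)` with `a, b ≤ q - 1`, `a ||| b = q - 1`, and some `i ≡ b (mod m)` with
`i ≤₂ a &&& b` is exactly `(2^{d+1} - 1)^{ℓ'}`, which is at most `2^{ℓ'} · 2^{ℓ'd}`. -/
theorem bad_monomial_count_exact_and_bound (ℓ' d : ℕ) :
    ((Finset.range (2 ^ (ℓ' * d)) ×ˢ Finset.range (2 ^ (ℓ' * d))).filter (fun p =>
        p.1 ||| p.2 = 2 ^ (ℓ' * d) - 1 ∧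
        ∃ i : ℕ, i % (∑ k ∈ Finset.range d, 2 ^ (k * ℓ')) =
            p.2 % (∑ k ∈ Finset.range d, 2 ^ (k * ℓ')) ∧
          ∀ j, i.testBit j = true → (p.1 &&& p.2).testBit j = true)).card
        = (2 ^ (d + 1) - 1) ^ ℓ' ∧
      (2 ^ (d + 1) - 1) ^ ℓ' ≤ 2 ^ ℓ' * 2 ^ (ℓ' * d) := by
  constructor
  · by_cases h0 : ℓ' = 0 ∨ d = 0
    · have hpow : ℓ' * d = 0 := by rcases h0 with h | h <;> simp [h]
      have hrhs : (2 ^ (d + 1) - 1) ^ ℓ' = 1 := by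
        rcases h0 with h | h
        · simp [h]
        · simp [h]
      rw [hrhs]
      have hset : ((Finset.range (2 ^ (ℓ' * d)) ×ˢ Finset.range (2 ^ (ℓ' * d))).filter (fun p =>
          p.1 ||| p.2 = 2 ^ (ℓ' * d) - 1 ∧
          ∃ i : ℕ, i % (∑ k ∈ Finset.range d, 2 ^ (k * ℓ')) =
              p.2 % (∑ k ∈ Finset.range d, 2 ^ (k * ℓ')) ∧
            ∀ j, i.testBit j = true → (p.1 &&& p.2).testBit j = true))
          = {((0:ℕ), (0:ℕ))} := by
        ext p
        obtain ⟨x, y⟩ := p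
        simp only [Finset.mem_filter, Finset.mem_product, Finset.mem_range, hpow, pow_zero,
          Nat.lt_one_iff, Finset.mem_singleton, Prod.mk.injEq]
        constructor
        · rintro ⟨⟨h1, h2⟩, -⟩
          exact ⟨h1, h2⟩
        · rintro ⟨rfl, rfl⟩
          refine ⟨⟨rfl, rfl⟩, by simp, 0, rfl, ?_⟩
          intro j hj
          rw [Nat.zero_testBit] at hj
          exact absurd hj (by simp)
      rw [hset, Finset.card_singleton]
    · push_neg at h0
      exact BadCount.main_count ℓ' d (Nat.pos_of_ne_zero h0.1) (Nat.pos_of_ne_zero h0.2)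
  · calc (2 ^ (d + 1) - 1) ^ ℓ' ≤ (2 ^ (d + 1)) ^ ℓ' :=
        Nat.pow_le_pow_left (Nat.sub_le _ _) _
      _ = 2 ^ ((d + 1) * ℓ') := by rw [← pow_mul]
      _ = 2 ^ ℓ' * 2 ^ (ℓ' * d) := by rw [← pow_add]; congr 1; ring
end
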